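/- arXiv:0901.0383 — 8 statements merged into one kernel-verified Lean document; each statement's English description precedes it below -/
import Mathlib

section
/- Fix z ∈ ℝ. The function f_z is continuous on ℝ, differentiable at every x ≠ z, satisfies Stein's equation f_z′(x) − x f_z(x) = 1_{(−∞,z]}(x) − (1 − Φ̄(z)) for every x ≠ z, and sup_{x ≠ z} |f_z′(x)| ≤ 1. -/
open MeasureTheory

open Set Filter Real Topology

lemma g_int : Integrable (fun x : ℝ => Real.exp (-x ^ 2 / 2)) := by
  have h : (fun x : ℝ => Real.exp (-x ^ 2 / 2)) = fun x => Real.exp (-(1/2 : ℝ) * x ^ 2) := by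
    funext x; congr 1; ring
  rw [h]; exact integrable_exp_neg_mul_sq (by norm_num)

lemma xg_int : Integrable (fun x : ℝ => x * Real.exp (-x ^ 2 / 2)) := by
  have h : (fun x : ℝ => x * Real.exp (-x ^ 2 / 2)) = fun x => x * Real.exp (-(1/2 : ℝ) * x ^ 2) := by
    funext x; congr 2; ring
  rw [h]; exact integrable_mul_exp_neg_mul_sq (by norm_num)

lemma g_cont : Continuous (fun x : ℝ => Real.exp (-x ^ 2 / 2)) := by continuity

lemma g_total : ∫ x : ℝ, Real.exp (-x ^ 2 / 2) = Real.sqrt (2 * Real.pi) := by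
  have h : (fun x : ℝ => Real.exp (-x ^ 2 / 2)) = fun x => Real.exp (-(1/2 : ℝ) * x ^ 2) := by
    funext x; congr 1; ring
  rw [h, integral_gaussian]
  norm_num [mul_comm]

lemma tail_nonneg (u : ℝ) : 0 ≤ ∫ x in Ioi u, Real.exp (-x ^ 2 / 2) :=
  setIntegral_nonneg measurableSet_Ioi fun x _ => (Real.exp_pos _).le

lemma tail_le (u : ℝ) : ∫ x in Ioi u, Real.exp (-x ^ 2 / 2) ≤ Real.sqrt (2 * Real.pi) := by
  rw [← g_total]
  exact setIntegral_le_integral g_int (Filter.Eventually.of_forall fun x => (Real.exp_pos _).le)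

lemma tail_anti {u v : ℝ} (h : u ≤ v) :
    ∫ x in Ioi v, Real.exp (-x ^ 2 / 2) ≤ ∫ x in Ioi u, Real.exp (-x ^ 2 / 2) :=
  setIntegral_mono_set g_int.integrableOn
    (Filter.Eventually.of_forall fun x => (Real.exp_pos _).le)
    (Ioi_subset_Ioi h).eventuallyLE

lemma tail_symm (u : ℝ) :
    ∫ x in Ioi (-u), Real.exp (-x ^ 2 / 2)
      = Real.sqrt (2 * Real.pi) - ∫ x in Ioi u, Real.exp (-x ^ 2 / 2) := by
  have h1 : ∫ x in Ioi (-u), Real.exp (-x ^ 2 / 2) = ∫ x in Iic u, Real.exp (-x ^ 2 / 2) := by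
    rw [← integral_comp_neg_Iic u (fun x => Real.exp (-x ^ 2 / 2))]
    simp only [neg_sq]
  have h2 := intervalIntegral.integral_Iic_add_Ioi (μ := volume)
    (f := fun x : ℝ => Real.exp (-x ^ 2 / 2)) (b := u) g_int.integrableOn g_int.integrableOn
  rw [g_total] at h2
  linarith [h2, h1.le, h1.ge]

lemma tail_hasDeriv (u : ℝ) :
    HasDerivAt (fun v => ∫ x in Ioi v, Real.exp (-x ^ 2 / 2)) (-Real.exp (-u ^ 2 / 2)) u := by
  have key : ∀ v : ℝ, ∫ x in Ioi v, Real.exp (-x ^ 2 / 2)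
      = (∫ x in Ioi (0:ℝ), Real.exp (-x ^ 2 / 2)) - ∫ x in (0:ℝ)..v, Real.exp (-x ^ 2 / 2) := by
    intro v
    have hs := intervalIntegral.integral_Iic_sub_Iic (μ := volume)
      (f := fun x : ℝ => Real.exp (-x ^ 2 / 2)) (a := (0:ℝ)) (b := v)
      g_int.integrableOn g_int.integrableOn
    have h0 := intervalIntegral.integral_Iic_add_Ioi (μ := volume)
      (f := fun x : ℝ => Real.exp (-x ^ 2 / 2)) (b := (0:ℝ)) g_int.integrableOn g_int.integrableOn
    have hv := intervalIntegral.integral_Iic_add_Ioi (μ := volume)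
      (f := fun x : ℝ => Real.exp (-x ^ 2 / 2)) (b := v) g_int.integrableOn g_int.integrableOn
    rw [← hs]
    linarith [h0, hv]
  have hd : HasDerivAt (fun v => ∫ x in (0:ℝ)..v, Real.exp (-x ^ 2 / 2)) (Real.exp (-u ^ 2 / 2)) u :=
    intervalIntegral.integral_hasDerivAt_right g_int.intervalIntegrable
      (g_cont.stronglyMeasurableAtFilter _ _) g_cont.continuousAt
  have h := (hasDerivAt_const u (∫ x in Ioi (0:ℝ), Real.exp (-x ^ 2 / 2))).sub hd
  rw [zero_sub] at h
  exact h.congr_of_eventuallyEq (Filter.Eventually.of_forall key)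

lemma tail_moment (u : ℝ) :
    ∫ x in Ioi u, x * Real.exp (-x ^ 2 / 2) = Real.exp (-u ^ 2 / 2) := by
  have hderiv : ∀ x ∈ Ioi u, HasDerivAt (fun y : ℝ => -Real.exp (-y ^ 2 / 2))
      (x * Real.exp (-x ^ 2 / 2)) x := by
    intro x _
    have h1 : HasDerivAt (fun y : ℝ => -y ^ 2 / 2) (-x) x := by
      have h := ((hasDerivAt_pow 2 x).neg).div_const 2
      have hv : -(((2:ℕ):ℝ) * x ^ (2-1)) / 2 = -x := by push_cast; ring
      rw [hv] at h
      exact h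
    have h2 := (h1.exp).neg
    refine h2.congr_deriv ?_
    ring
  have htend : Tendsto (fun y : ℝ => -Real.exp (-y ^ 2 / 2)) atTop (𝓝 0) := by
    have h1 : Tendsto (fun y : ℝ => -y ^ 2 / 2) atTop atBot :=
      Filter.Tendsto.atBot_div_const (by norm_num)
        (tendsto_neg_atTop_atBot.comp (tendsto_pow_atTop two_ne_zero))
    have h2 := Real.tendsto_exp_atBot.comp h1
    simpa using h2.neg
  have := integral_Ioi_of_hasDerivAt_of_tendsto
    (f := fun y : ℝ => -Real.exp (-y ^ 2 / 2))
    (f' := fun x => x * Real.exp (-x ^ 2 / 2))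
    (g_cont.neg.continuousWithinAt) (fun x hx => hderiv x hx) xg_int.integrableOn htend
  rw [this]; ring


/-- The standard normal tail function `Φ̄(u) = (1/√(2π)) ∫_u^∞ e^{-x²/2} dx`. -/
noncomputable def gaussTail (u : ℝ) : ℝ :=
  (Real.sqrt (2 * Real.pi))⁻¹ * ∫ x in Set.Ioi u, Real.exp (-x ^ 2 / 2)

lemma sqrt2pi_pos : 0 < Real.sqrt (2 * Real.pi) :=
  Real.sqrt_pos.2 (by positivity)

lemma sc_one : Real.sqrt (2 * Real.pi) * (Real.sqrt (2 * Real.pi))⁻¹ = 1 :=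
  mul_inv_cancel₀ (ne_of_gt sqrt2pi_pos)

lemma ee_one (x : ℝ) : Real.exp (x ^ 2 / 2) * Real.exp (-x ^ 2 / 2) = 1 := by
  rw [← Real.exp_add, show x ^ 2 / 2 + -x ^ 2 / 2 = 0 by ring, Real.exp_zero]

lemma T_nonneg (u : ℝ) : 0 ≤ gaussTail u :=
  mul_nonneg (inv_nonneg.2 sqrt2pi_pos.le) (tail_nonneg u)

lemma T_le_one (u : ℝ) : gaussTail u ≤ 1 := by
  have := mul_le_mul_of_nonneg_left (tail_le u) (inv_nonneg.2 sqrt2pi_pos.le)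
  rwa [inv_mul_cancel₀ (ne_of_gt sqrt2pi_pos)] at this

lemma T_anti {u v : ℝ} (h : u ≤ v) : gaussTail v ≤ gaussTail u :=
  mul_le_mul_of_nonneg_left (tail_anti h) (inv_nonneg.2 sqrt2pi_pos.le)

lemma T_symm (u : ℝ) : gaussTail (-u) = 1 - gaussTail u := by
  unfold gaussTail
  rw [tail_symm u, mul_sub, inv_mul_cancel₀ (ne_of_gt sqrt2pi_pos)]

lemma T_hasDeriv (u : ℝ) :
    HasDerivAt gaussTail (-((Real.sqrt (2 * Real.pi))⁻¹ * Real.exp (-u ^ 2 / 2))) u := by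
  have h := (tail_hasDeriv u).const_mul (Real.sqrt (2 * Real.pi))⁻¹
  refine h.congr_deriv ?_
  ring

lemma T_cont : Continuous gaussTail :=
  continuous_iff_continuousAt.2 fun u => (T_hasDeriv u).continuousAt

lemma key1 (x : ℝ) :
    x * (Real.sqrt (2 * Real.pi) * Real.exp (x ^ 2 / 2)) * gaussTail x ≤ 1 := by
  rcases le_or_gt x 0 with hx | hx
  · have : x * (Real.sqrt (2 * Real.pi) * Real.exp (x ^ 2 / 2)) * gaussTail x ≤ 0 :=
      mul_nonpos_of_nonpos_of_nonneg
        (mul_nonpos_of_nonpos_of_nonneg hx (by positivity)) (T_nonneg x)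
    linarith
  · have hkey : x * ∫ t in Set.Ioi x, Real.exp (-t ^ 2 / 2) ≤ Real.exp (-x ^ 2 / 2) := by
      calc x * ∫ t in Set.Ioi x, Real.exp (-t ^ 2 / 2)
          = ∫ t in Set.Ioi x, x * Real.exp (-t ^ 2 / 2) := (integral_const_mul x _).symm
        _ ≤ ∫ t in Set.Ioi x, t * Real.exp (-t ^ 2 / 2) := by
            apply setIntegral_mono_on (g_int.integrableOn.const_mul x) xg_int.integrableOn
              measurableSet_Ioi
            intro t ht
            exact mul_le_mul_of_nonneg_right (le_of_lt ht) (Real.exp_pos _).le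
        _ = Real.exp (-x ^ 2 / 2) := tail_moment x
    unfold gaussTail
    set I := ∫ t in Set.Ioi x, Real.exp (-t ^ 2 / 2)
    calc x * (Real.sqrt (2 * Real.pi) * Real.exp (x ^ 2 / 2)) * ((Real.sqrt (2 * Real.pi))⁻¹ * I)
        = Real.exp (x ^ 2 / 2) * (x * I) * (Real.sqrt (2 * Real.pi) * (Real.sqrt (2 * Real.pi))⁻¹) := by
          ring
      _ = Real.exp (x ^ 2 / 2) * (x * I) := by rw [sc_one, mul_one]
      _ ≤ Real.exp (x ^ 2 / 2) * Real.exp (-x ^ 2 / 2) :=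
          mul_le_mul_of_nonneg_left hkey (Real.exp_pos _).le
      _ = 1 := ee_one x

lemma key2 (x : ℝ) :
    -x * (Real.sqrt (2 * Real.pi) * Real.exp (x ^ 2 / 2)) * (1 - gaussTail x) ≤ 1 := by
  have h := key1 (-x)
  rwa [show (-x) ^ 2 = x ^ 2 by ring, T_symm] at h


/-- Stein's solution `f_z` of Stein's equation for the test function `h = 1_{(-∞,z]}`. -/
noncomputable def steinSol (z x : ℝ) : ℝ :=
  if x ≤ z then
    Real.sqrt (2 * Real.pi) * Real.exp (x ^ 2 / 2) * (1 - gaussTail x) * gaussTail z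
  else
    Real.sqrt (2 * Real.pi) * Real.exp (x ^ 2 / 2) * (1 - gaussTail z) * gaussTail x

lemma E_hasDeriv (x : ℝ) :
    HasDerivAt (fun y : ℝ => Real.exp (y ^ 2 / 2)) (Real.exp (x ^ 2 / 2) * x) x := by
  have h0 := (hasDerivAt_pow 2 x).div_const 2
  rw [show (((2:ℕ):ℝ) * x ^ (2 - 1)) / 2 = x by push_cast; ring] at h0
  exact h0.exp

lemma deriv1 (z x : ℝ) :
    HasDerivAt
      (fun y => Real.sqrt (2 * Real.pi) * Real.exp (y ^ 2 / 2) * (1 - gaussTail y) * gaussTail z)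
      (x * (Real.sqrt (2 * Real.pi) * Real.exp (x ^ 2 / 2) * (1 - gaussTail x) * gaussTail z)
        + gaussTail z) x := by
  have h := ((((E_hasDeriv x).const_mul (Real.sqrt (2 * Real.pi))).mul
    ((hasDerivAt_const x (1:ℝ)).sub (T_hasDeriv x))).mul_const (gaussTail z))
  refine h.congr_deriv ?_
  symm
  simp only [Pi.sub_apply]
  have h1 := sc_one
  have h2 := ee_one x
  linear_combination (-(gaussTail z * Real.exp (x ^ 2 / 2) * Real.exp (-x ^ 2 / 2))) * h1
    + (-(gaussTail z)) * h2

lemma deriv2 (z x : ℝ) :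
    HasDerivAt
      (fun y => Real.sqrt (2 * Real.pi) * Real.exp (y ^ 2 / 2) * (1 - gaussTail z) * gaussTail y)
      (x * (Real.sqrt (2 * Real.pi) * Real.exp (x ^ 2 / 2) * (1 - gaussTail z) * gaussTail x)
        - (1 - gaussTail z)) x := by
  have h := ((((E_hasDeriv x).const_mul (Real.sqrt (2 * Real.pi))).mul_const
    (1 - gaussTail z)).mul (T_hasDeriv x))
  refine h.congr_deriv ?_
  symm
  have h1 := sc_one
  have h2 := ee_one x
  linear_combination ((1 - gaussTail z) * Real.exp (x ^ 2 / 2) * Real.exp (-x ^ 2 / 2)) * h1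
    + (1 - gaussTail z) * h2

/-- `f_z` is continuous, differentiable off `z`, solves Stein's equation
`f_z′(x) − x f_z(x) = 1_{(−∞,z]}(x) − (1 − Φ̄(z))` for `x ≠ z`, and its derivative
is bounded by `1` in absolute value wherever it exists (i.e. off `z`). -/
theorem stein_solution_properties (z : ℝ) :
    Continuous (steinSol z) ∧
      ∀ x : ℝ, x ≠ z → ∃ d : ℝ, HasDerivAt (steinSol z) d x ∧
        d - x * steinSol z x = (if x ≤ z then (1 : ℝ) else 0) - (1 - gaussTail z) ∧
        |d| ≤ 1 := by
  have hEc : Continuous fun y : ℝ => Real.exp (y ^ 2 / 2) :=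
    Real.continuous_exp.comp ((continuous_pow 2).div_const 2)
  constructor
  · unfold steinSol
    apply Continuous.if_le
    · exact ((continuous_const.mul hEc).mul (continuous_const.sub T_cont)).mul continuous_const
    · exact ((continuous_const.mul hEc).mul continuous_const).mul T_cont
    · exact continuous_id
    · exact continuous_const
    · intro x hx; rw [hx]
  · intro x hx
    rcases lt_or_gt_of_ne hx with hlt | hgt
    · -- x < z
      have hsx : steinSol z x
          = Real.sqrt (2 * Real.pi) * Real.exp (x ^ 2 / 2) * (1 - gaussTail x) * gaussTail z := by
        simp [steinSol, hlt.le]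
      refine ⟨x * steinSol z x + gaussTail z, ?_, ?_, ?_⟩
      · rw [hsx]
        exact (deriv1 z x).congr_of_eventuallyEq
          (by filter_upwards [Iio_mem_nhds hlt] with y hy; simp [steinSol, (Set.mem_Iio.1 hy).le])
      · rw [if_pos hlt.le]; ring
      · rw [hsx]
        have hk1 := key1 x
        have hk2 := key2 x
        have ha0 := T_nonneg x
        have ha1 := T_le_one x
        have hb0 := T_nonneg z
        have hb1 := T_le_one z
        have hab : gaussTail z ≤ gaussTail x := T_anti hlt.le
        rw [abs_le]
        constructor
        · nlinarith [mul_nonneg hb0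
            (show (0:ℝ) ≤ 1 + x * (Real.sqrt (2 * Real.pi) * Real.exp (x ^ 2 / 2))
              * (1 - gaussTail x) by nlinarith [hk2])]
        · have h1 : (0:ℝ) ≤ (1 - gaussTail x)
              * (1 - x * (Real.sqrt (2 * Real.pi) * Real.exp (x ^ 2 / 2)) * gaussTail x) :=
            mul_nonneg (by linarith) (by nlinarith [hk1])
          have h2 : (0:ℝ) ≤ (gaussTail x - gaussTail z)
              * (1 + x * (Real.sqrt (2 * Real.pi) * Real.exp (x ^ 2 / 2)) * (1 - gaussTail x)) :=
            mul_nonneg (by linarith) (by nlinarith [hk2])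
          nlinarith [h1, h2]
    · -- z < x
      have hsx : steinSol z x
          = Real.sqrt (2 * Real.pi) * Real.exp (x ^ 2 / 2) * (1 - gaussTail z) * gaussTail x := by
        simp [steinSol, not_le.2 hgt]
      refine ⟨x * steinSol z x - (1 - gaussTail z), ?_, ?_, ?_⟩
      · rw [hsx]
        exact (deriv2 z x).congr_of_eventuallyEq
          (by filter_upwards [Ioi_mem_nhds hgt] with y hy; simp [steinSol, not_le.2 (Set.mem_Ioi.1 hy)])
      · rw [if_neg (not_le.2 hgt)]; ring
      · rw [hsx]
        have hk1 := key1 x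
        have hk2 := key2 x
        have ha0 := T_nonneg x
        have ha1 := T_le_one x
        have hb0 := T_nonneg z
        have hb1 := T_le_one z
        have hab : gaussTail x ≤ gaussTail z := T_anti hgt.le
        rw [abs_le]
        constructor
        · have h1 : (0:ℝ) ≤ (gaussTail z - gaussTail x)
              * (1 - x * (Real.sqrt (2 * Real.pi) * Real.exp (x ^ 2 / 2)) * gaussTail x) :=
            mul_nonneg (by linarith) (by nlinarith [hk1])
          have h2 : (0:ℝ) ≤ gaussTail x
              * (1 + x * (Real.sqrt (2 * Real.pi) * Real.exp (x ^ 2 / 2)) * (1 - gaussTail x)) :=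
            mul_nonneg ha0 (by nlinarith [hk2])
          nlinarith [h1, h2]
        · nlinarith [mul_nonneg (show (0:ℝ) ≤ 1 - gaussTail z by linarith)
            (show (0:ℝ) ≤ 1 - x * (Real.sqrt (2 * Real.pi) * Real.exp (x ^ 2 / 2)) * gaussTail x
              by nlinarith [hk1])]
end

section
/- Fix z ∈ ℝ, and let X be an integrable real random variable with P[X = z] = 0. Then P[X > z] = Φ̄(z) − E[f_z′(X)] + E[X f_z(X)], where f_z′ is the derivative of Stein's solution (defined at every point except z, hence almost surely at X). -/
open MeasureTheory

namespace SteinAux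

open Set

noncomputable def φ (t : ℝ) : ℝ := Real.exp (-t ^ 2 / 2)

lemma φ_eq : φ = fun t => Real.exp (-(1/2 : ℝ) * t ^ 2) := by
  funext t; simp only [φ]; ring_nf

lemma φ_pos (t : ℝ) : 0 < φ t := Real.exp_pos _

lemma φ_cont : Continuous φ := by
  unfold φ; fun_prop

lemma φ_int : Integrable φ := by
  rw [φ_eq]; exact integrable_exp_neg_mul_sq (by norm_num)

lemma φ_total : ∫ t, φ t = Real.sqrt (2 * Real.pi) := by
  rw [φ_eq, integral_gaussian]
  norm_num
  rw [mul_comm]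

lemma sqrt2pi_pos : 0 < Real.sqrt (2 * Real.pi) := Real.sqrt_pos.2 (by positivity)

noncomputable def A (u : ℝ) : ℝ := ∫ t in Set.Ioi u, φ t
noncomputable def B (u : ℝ) : ℝ := ∫ t in Set.Iic u, φ t

lemma B_add_A (u : ℝ) : B u + A u = Real.sqrt (2 * Real.pi) := by
  rw [← φ_total]
  exact intervalIntegral.integral_Iic_add_Ioi φ_int.integrableOn φ_int.integrableOn

lemma A_nonneg (u : ℝ) : 0 ≤ A u :=
  setIntegral_nonneg measurableSet_Ioi fun t _ => (φ_pos t).le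
lemma B_nonneg (u : ℝ) : 0 ≤ B u :=
  setIntegral_nonneg measurableSet_Iic fun t _ => (φ_pos t).le

lemma gaussTail_def (u : ℝ) : gaussTail u = (Real.sqrt (2 * Real.pi))⁻¹ * A u := rfl

lemma gaussTail_nonneg (u : ℝ) : 0 ≤ gaussTail u :=
  mul_nonneg (inv_nonneg.2 sqrt2pi_pos.le) (A_nonneg u)

lemma one_sub_gaussTail (u : ℝ) : 1 - gaussTail u = (Real.sqrt (2 * Real.pi))⁻¹ * B u := by
  have h := B_add_A u
  have h2 : (Real.sqrt (2 * Real.pi))⁻¹ * (B u + A u) = 1 := by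
    rw [h]; exact inv_mul_cancel₀ sqrt2pi_pos.ne'
  rw [mul_add] at h2
  rw [gaussTail_def]
  linarith

lemma gaussTail_le_one (u : ℝ) : gaussTail u ≤ 1 := by
  have := one_sub_gaussTail u
  have := B_nonneg u
  have : 0 ≤ (Real.sqrt (2 * Real.pi))⁻¹ * B u :=
    mul_nonneg (inv_nonneg.2 sqrt2pi_pos.le) (B_nonneg u)
  linarith [one_sub_gaussTail u]

lemma A_antitone : Antitone A := by
  intro u v h
  exact setIntegral_mono_set φ_int.integrableOn
    (Filter.Eventually.of_forall fun t => (φ_pos t).le)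
    (HasSubset.Subset.eventuallyLE (Ioi_subset_Ioi h))

lemma gaussTail_antitone : Antitone gaussTail := fun u v h =>
  mul_le_mul_of_nonneg_left (A_antitone h) (inv_nonneg.2 sqrt2pi_pos.le)

lemma gaussTail_measurable : Measurable gaussTail := gaussTail_antitone.measurable


lemma hB (u : ℝ) : HasDerivAt B (φ u) u := by
  have hBeq : B = fun v => B 0 + ∫ t in (0:ℝ)..v, φ t := by
    funext v
    have h := intervalIntegral.integral_Iic_sub_Iic (μ := volume) (f := φ)
      φ_int.integrableOn φ_int.integrableOn (a := 0) (b := v)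
    simp only [B]
    linarith
  rw [hBeq]
  exact (intervalIntegral.integral_hasDerivAt_right
    φ_int.intervalIntegrable
    φ_cont.stronglyMeasurable.stronglyMeasurableAtFilter
    φ_cont.continuousAt).const_add (B 0)

lemma hA (u : ℝ) : HasDerivAt A (-(φ u)) u := by
  have hAeq : A = fun v => Real.sqrt (2 * Real.pi) - B v := by
    funext v; have := B_add_A v; linarith
  rw [hAeq]
  simpa using (hB u).const_sub (Real.sqrt (2 * Real.pi))

lemma hGT (u : ℝ) : HasDerivAt gaussTail (-((Real.sqrt (2 * Real.pi))⁻¹ * φ u)) u := by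
  have h := (hA u).const_mul (Real.sqrt (2 * Real.pi))⁻¹
  rw [mul_neg] at h
  exact h

lemma A_bound {x : ℝ} (hx : 0 ≤ x) :
    A x ≤ Real.exp (-x ^ 2 / 2) * Real.sqrt (2 * Real.pi) := by
  have hint2 : Integrable (fun t : ℝ => Real.exp (-x ^ 2 / 2) * φ (t - x)) := by
    have h1 : Integrable (fun t : ℝ => φ (t - x)) := by
      simpa [sub_eq_add_neg] using φ_int.comp_add_right (-x)
    exact h1.const_mul _
  have h1 : A x ≤ ∫ t in Set.Ioi x, Real.exp (-x ^ 2 / 2) * φ (t - x) := by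
    refine setIntegral_mono_on φ_int.integrableOn hint2.integrableOn measurableSet_Ioi ?_
    intro t ht
    simp only [φ, ← Real.exp_add]
    apply Real.exp_le_exp.2
    have h2 : x * x ≤ t * x := mul_le_mul_of_nonneg_right (le_of_lt ht) hx
    nlinarith
  have h2 : (∫ t in Set.Ioi x, Real.exp (-x ^ 2 / 2) * φ (t - x))
      ≤ ∫ t, Real.exp (-x ^ 2 / 2) * φ (t - x) :=
    setIntegral_le_integral hint2
      (Filter.Eventually.of_forall fun t => mul_nonneg (Real.exp_pos _).le (φ_pos _).le)
  have h3 : (∫ t, Real.exp (-x ^ 2 / 2) * φ (t - x))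
      = Real.exp (-x ^ 2 / 2) * Real.sqrt (2 * Real.pi) := by
    rw [integral_const_mul]
    congr 1
    rw [← φ_total]
    simpa [sub_eq_add_neg] using integral_add_right_eq_self φ (-x)
  calc A x ≤ _ := h1
    _ ≤ _ := h2
    _ = _ := h3

lemma B_eq_A_neg (x : ℝ) : B x = A (-x) := by
  have hφ : ∀ t : ℝ, φ t = φ (-t) := fun t => by simp [φ]
  calc B x = ∫ t in Set.Iic x, φ (-t) := by
        simp only [B]; exact setIntegral_congr_fun measurableSet_Iic fun t _ => hφ t
    _ = ∫ t in Set.Ioi (-x), φ t := integral_comp_neg_Iic x φ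
    _ = A (-x) := rfl

lemma B_bound {x : ℝ} (hx : x ≤ 0) :
    B x ≤ Real.exp (-x ^ 2 / 2) * Real.sqrt (2 * Real.pi) := by
  rw [B_eq_A_neg]
  have := A_bound (x := -x) (by linarith)
  simpa using this

lemma exp_mul_exp_neg (x : ℝ) : Real.exp (x ^ 2 / 2) * Real.exp (-x ^ 2 / 2) = 1 := by
  rw [← Real.exp_add]; ring_nf; exact Real.exp_zero

lemma key_pos {x : ℝ} (hx : 0 ≤ x) : Real.exp (x ^ 2 / 2) * gaussTail x ≤ 1 := by
  rw [gaussTail_def]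
  have h := A_bound hx
  have h2 : Real.exp (x ^ 2 / 2) * ((Real.sqrt (2 * Real.pi))⁻¹ * A x)
      ≤ Real.exp (x ^ 2 / 2) * ((Real.sqrt (2 * Real.pi))⁻¹ *
        (Real.exp (-x ^ 2 / 2) * Real.sqrt (2 * Real.pi))) := by
    apply mul_le_mul_of_nonneg_left _ (Real.exp_pos _).le
    exact mul_le_mul_of_nonneg_left h (inv_nonneg.2 sqrt2pi_pos.le)
  refine h2.trans (le_of_eq ?_)
  have h3 := exp_mul_exp_neg x
  have h4 : (Real.sqrt (2 * Real.pi))⁻¹ * Real.sqrt (2 * Real.pi) = 1 :=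
    inv_mul_cancel₀ sqrt2pi_pos.ne'
  nlinarith [h3, h4]

lemma key_neg {x : ℝ} (hx : x ≤ 0) : Real.exp (x ^ 2 / 2) * (1 - gaussTail x) ≤ 1 := by
  rw [one_sub_gaussTail]
  have h := B_bound hx
  have h2 : Real.exp (x ^ 2 / 2) * ((Real.sqrt (2 * Real.pi))⁻¹ * B x)
      ≤ Real.exp (x ^ 2 / 2) * ((Real.sqrt (2 * Real.pi))⁻¹ *
        (Real.exp (-x ^ 2 / 2) * Real.sqrt (2 * Real.pi))) := by
    apply mul_le_mul_of_nonneg_left _ (Real.exp_pos _).le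
    exact mul_le_mul_of_nonneg_left h (inv_nonneg.2 sqrt2pi_pos.le)
  refine h2.trans (le_of_eq ?_)
  have h3 := exp_mul_exp_neg x
  have h4 : (Real.sqrt (2 * Real.pi))⁻¹ * Real.sqrt (2 * Real.pi) = 1 :=
    inv_mul_cancel₀ sqrt2pi_pos.ne'
  nlinarith [h3, h4]

lemma steinSol_nonneg (z x : ℝ) : 0 ≤ steinSol z x := by
  unfold steinSol
  have h1 := gaussTail_nonneg x
  have h2 := gaussTail_nonneg z
  have h3 := gaussTail_le_one x
  have h4 := gaussTail_le_one z
  split <;>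
  · apply mul_nonneg (mul_nonneg (mul_nonneg sqrt2pi_pos.le (Real.exp_pos _).le) (by linarith)) (by linarith)

lemma steinSol_abs_le (z x : ℝ) : |steinSol z x| ≤ Real.sqrt (2 * Real.pi) := by
  rw [abs_of_nonneg (steinSol_nonneg z x)]
  unfold steinSol
  have h1 := gaussTail_nonneg x
  have h2 := gaussTail_nonneg z
  have h3 := gaussTail_le_one x
  have h4 := gaussTail_le_one z
  have hE := (Real.exp_pos (x ^ 2 / 2)).le
  split_ifs with h
  · rcases le_or_gt x 0 with hx | hx
    · have key := key_neg hx
      calc Real.sqrt (2 * Real.pi) * Real.exp (x ^ 2 / 2) * (1 - gaussTail x) * gaussTail z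
          ≤ Real.sqrt (2 * Real.pi) * Real.exp (x ^ 2 / 2) * (1 - gaussTail x) * 1 := by
            apply mul_le_mul_of_nonneg_left h4
            exact mul_nonneg (mul_nonneg sqrt2pi_pos.le hE) (by linarith)
        _ = Real.sqrt (2 * Real.pi) * (Real.exp (x ^ 2 / 2) * (1 - gaussTail x)) := by ring
        _ ≤ Real.sqrt (2 * Real.pi) * 1 := mul_le_mul_of_nonneg_left key sqrt2pi_pos.le
        _ = Real.sqrt (2 * Real.pi) := mul_one _
    · have key := key_pos hx.le
      have hgz : gaussTail z ≤ gaussTail x := gaussTail_antitone h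
      calc Real.sqrt (2 * Real.pi) * Real.exp (x ^ 2 / 2) * (1 - gaussTail x) * gaussTail z
          ≤ Real.sqrt (2 * Real.pi) * Real.exp (x ^ 2 / 2) * 1 * gaussTail x := by
            apply mul_le_mul (by apply mul_le_mul_of_nonneg_left (by linarith); exact mul_nonneg sqrt2pi_pos.le hE) hgz h2
            exact mul_nonneg (mul_nonneg sqrt2pi_pos.le hE) one_pos.le
        _ = Real.sqrt (2 * Real.pi) * (Real.exp (x ^ 2 / 2) * gaussTail x) := by ring
        _ ≤ Real.sqrt (2 * Real.pi) * 1 := mul_le_mul_of_nonneg_left key sqrt2pi_pos.le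
        _ = Real.sqrt (2 * Real.pi) := mul_one _
  · push_neg at h
    rcases le_or_gt 0 x with hx | hx
    · have key := key_pos hx
      calc Real.sqrt (2 * Real.pi) * Real.exp (x ^ 2 / 2) * (1 - gaussTail z) * gaussTail x
          ≤ Real.sqrt (2 * Real.pi) * Real.exp (x ^ 2 / 2) * 1 * gaussTail x := by
            apply mul_le_mul_of_nonneg_right _ h1
            apply mul_le_mul_of_nonneg_left (by linarith)
            exact mul_nonneg sqrt2pi_pos.le hE
        _ = Real.sqrt (2 * Real.pi) * (Real.exp (x ^ 2 / 2) * gaussTail x) := by ring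
        _ ≤ Real.sqrt (2 * Real.pi) * 1 := mul_le_mul_of_nonneg_left key sqrt2pi_pos.le
        _ = Real.sqrt (2 * Real.pi) := mul_one _
    · have key := key_neg hx.le
      have hgz : 1 - gaussTail z ≤ 1 - gaussTail x := by
        have := gaussTail_antitone h.le; linarith
      calc Real.sqrt (2 * Real.pi) * Real.exp (x ^ 2 / 2) * (1 - gaussTail z) * gaussTail x
          ≤ Real.sqrt (2 * Real.pi) * Real.exp (x ^ 2 / 2) * (1 - gaussTail x) * 1 := by
            apply mul_le_mul (mul_le_mul_of_nonneg_left hgz (mul_nonneg sqrt2pi_pos.le hE)) h3 h1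
            exact mul_nonneg (mul_nonneg sqrt2pi_pos.le hE) (by linarith)
        _ = Real.sqrt (2 * Real.pi) * (Real.exp (x ^ 2 / 2) * (1 - gaussTail x)) := by ring
        _ ≤ Real.sqrt (2 * Real.pi) * 1 := mul_le_mul_of_nonneg_left key sqrt2pi_pos.le
        _ = Real.sqrt (2 * Real.pi) := mul_one _

lemma hasDerivAt_exp_sq (x : ℝ) :
    HasDerivAt (fun y : ℝ => Real.exp (y ^ 2 / 2)) (x * Real.exp (x ^ 2 / 2)) x := by
  have h1 : HasDerivAt (fun y : ℝ => y ^ 2 / 2) x x := by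
    have := (hasDerivAt_pow 2 x).div_const 2
    simpa using this
  have := h1.exp
  simpa [mul_comm] using this

lemma steinSol_deriv_lt {z x : ℝ} (h : x < z) :
    HasDerivAt (steinSol z) (x * steinSol z x + gaussTail z) x := by
  have hmem : Set.Iio z ∈ nhds x := Iio_mem_nhds h
  have heq : steinSol z =ᶠ[nhds x]
      fun y => Real.sqrt (2 * Real.pi) * (Real.exp (y ^ 2 / 2) * (1 - gaussTail y)) * gaussTail z := by
    filter_upwards [hmem] with y hy
    simp only [steinSol, if_pos (le_of_lt (Set.mem_Iio.mp hy))]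
    ring
  have h2 : HasDerivAt (fun y => 1 - gaussTail y) ((Real.sqrt (2 * Real.pi))⁻¹ * φ x) x := by
    simpa using (hGT x).const_sub 1
  have hF := (((hasDerivAt_exp_sq x).mul h2).const_mul (Real.sqrt (2 * Real.pi))).mul_const
    (gaussTail z)
  have hval : Real.sqrt (2 * Real.pi) *
        (x * Real.exp (x ^ 2 / 2) * (1 - gaussTail x) +
          Real.exp (x ^ 2 / 2) * ((Real.sqrt (2 * Real.pi))⁻¹ * φ x)) * gaussTail z
      = x * steinSol z x + gaussTail z := by
    have hs : steinSol z x = Real.sqrt (2 * Real.pi) * Real.exp (x ^ 2 / 2) *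
        (1 - gaussTail x) * gaussTail z := by
      simp only [steinSol, if_pos (le_of_lt h)]
    have h3 := exp_mul_exp_neg x
    have h4 : Real.sqrt (2 * Real.pi) * (Real.sqrt (2 * Real.pi))⁻¹ = 1 :=
      mul_inv_cancel₀ sqrt2pi_pos.ne'
    rw [hs]
    simp only [φ]
    linear_combination gaussTail z * Real.exp (x ^ 2 / 2) * Real.exp (-x ^ 2 / 2) * h4 +
      gaussTail z * h3
  rw [hval] at hF
  exact hF.congr_of_eventuallyEq heq

lemma steinSol_deriv_gt {z x : ℝ} (h : z < x) :
    HasDerivAt (steinSol z) (x * steinSol z x + gaussTail z - 1) x := by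
  have hmem : Set.Ioi z ∈ nhds x := Ioi_mem_nhds h
  have heq : steinSol z =ᶠ[nhds x]
      fun y => Real.sqrt (2 * Real.pi) * (Real.exp (y ^ 2 / 2) * (1 - gaussTail z)) * gaussTail y := by
    filter_upwards [hmem] with y hy
    simp only [steinSol, if_neg (not_le.2 (Set.mem_Ioi.mp hy))]
    ring
  have hF := (((hasDerivAt_exp_sq x).mul_const (1 - gaussTail z)).const_mul
    (Real.sqrt (2 * Real.pi))).mul (hGT x)
  have hval : Real.sqrt (2 * Real.pi) * (x * Real.exp (x ^ 2 / 2) * (1 - gaussTail z)) * gaussTail x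
        + Real.sqrt (2 * Real.pi) * (Real.exp (x ^ 2 / 2) * (1 - gaussTail z)) *
          -((Real.sqrt (2 * Real.pi))⁻¹ * φ x)
      = x * steinSol z x + gaussTail z - 1 := by
    have hs : steinSol z x = Real.sqrt (2 * Real.pi) * Real.exp (x ^ 2 / 2) *
        (1 - gaussTail z) * gaussTail x := by
      simp only [steinSol, if_neg (not_le.2 h)]
    have h3 := exp_mul_exp_neg x
    have h4 : Real.sqrt (2 * Real.pi) * (Real.sqrt (2 * Real.pi))⁻¹ = 1 :=
      mul_inv_cancel₀ sqrt2pi_pos.ne'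
    rw [hs]
    simp only [φ]
    linear_combination (gaussTail z - 1) *
      (Real.exp (x ^ 2 / 2) * Real.exp (-x ^ 2 / 2) * h4 + h3)
  rw [hval] at hF
  exact hF.congr_of_eventuallyEq heq

lemma deriv_steinSol {z x : ℝ} (h : x ≠ z) :
    deriv (steinSol z) x =
      x * steinSol z x + gaussTail z - (if z < x then (1:ℝ) else 0) := by
  rcases lt_or_gt_of_ne h with h1 | h1
  · rw [(steinSol_deriv_lt h1).deriv, if_neg (by linarith)]
    ring
  · rw [(steinSol_deriv_gt h1).deriv, if_pos h1]

lemma steinSol_measurable (z : ℝ) : Measurable (steinSol z) := by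
  unfold steinSol
  have hg := gaussTail_measurable
  have hexp : Measurable fun x : ℝ => Real.exp (x ^ 2 / 2) :=
    (Real.continuous_exp.comp (by fun_prop)).measurable
  refine Measurable.ite (measurableSet_Iic (a := z)) ?_ ?_
  · exact ((measurable_const.mul hexp).mul (measurable_const.sub hg)).mul measurable_const
  · exact ((measurable_const.mul hexp).mul measurable_const).mul hg

end SteinAux

open SteinAux

/-- Stein's-equation representation of the tail: taking `x = X` in Stein's equation
and taking expectations, `P[X > z] = Φ̄(z) − E[f_z′(X)] + E[X f_z(X)]`. -/
theorem stein_tail_representation {Ω : Type*} {mΩ : MeasurableSpace Ω} (μ : Measure Ω)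
    [IsProbabilityMeasure μ] (X : Ω → ℝ) (hXint : Integrable X μ) (z : ℝ)
    (hz : μ {ω | X ω = z} = 0) :
    (μ {ω | z < X ω}).toReal =
      gaussTail z - (∫ ω, deriv (steinSol z) (X ω) ∂μ) +
        ∫ ω, X ω * steinSol z (X ω) ∂μ := by
  classical
  have hXm : AEMeasurable X μ := hXint.aemeasurable
  set g : Ω → ℝ := fun ω => X ω * steinSol z (X ω) with hgdef
  have hg_meas : AEStronglyMeasurable g μ :=
    (hXm.mul ((steinSol_measurable z).comp_aemeasurable hXm)).aestronglyMeasurable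
  have hg_int : Integrable g μ := by
    refine Integrable.mono' (hXint.norm.const_mul (Real.sqrt (2 * Real.pi))) hg_meas ?_
    filter_upwards with ω
    simp only [hgdef, norm_mul, Real.norm_eq_abs]
    rw [mul_comm (Real.sqrt (2 * Real.pi))]
    exact mul_le_mul_of_nonneg_left (steinSol_abs_le z (X ω)) (abs_nonneg _)
  set X' := hXm.mk X with hX'def
  have hX'm : Measurable X' := hXm.measurable_mk
  have hXX' : X =ᵐ[μ] X' := hXm.ae_eq_mk
  have hsmeas : MeasurableSet {ω | z < X' ω} := measurableSet_lt measurable_const hX'm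
  have hind'_int : Integrable (fun ω => ({ω | z < X' ω}).indicator (1 : Ω → ℝ) ω) μ :=
    (integrable_const (1 : ℝ)).indicator hsmeas
  have hind_eq : (fun ω => (if z < X ω then (1:ℝ) else 0)) =ᵐ[μ]
      fun ω => ({ω | z < X' ω}).indicator (1 : Ω → ℝ) ω := by
    filter_upwards [hXX'] with ω hω
    simp [Set.indicator_apply, Set.mem_setOf_eq, hω]
  have hind_int : Integrable (fun ω => (if z < X ω then (1:ℝ) else 0)) μ :=
    hind'_int.congr hind_eq.symm
  have hind_val : ∫ ω, (if z < X ω then (1:ℝ) else 0) ∂μ = (μ {ω | z < X ω}).toReal := by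
    rw [integral_congr_ae hind_eq, integral_indicator_one hsmeas]
    rw [measureReal_def]
    congr 1
    apply measure_congr
    rw [Filter.eventuallyEq_set]
    filter_upwards [hXX'] with ω hω
    simp [Set.mem_setOf_eq, hω]
  have habs : ∀ᵐ ω ∂μ, X ω ≠ z := by
    rw [ae_iff]
    simpa using hz
  have hae : (fun ω => deriv (steinSol z) (X ω)) =ᵐ[μ]
      fun ω => g ω + gaussTail z - (if z < X ω then (1:ℝ) else 0) := by
    filter_upwards [habs] with ω hω
    exact deriv_steinSol hω
  have hderiv_val : ∫ ω, deriv (steinSol z) (X ω) ∂μ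
      = (∫ ω, g ω ∂μ) + gaussTail z - (μ {ω | z < X ω}).toReal := by
    have e1 : ∫ ω, (g ω + gaussTail z - (if z < X ω then (1:ℝ) else 0)) ∂μ
        = (∫ ω, (g ω + gaussTail z) ∂μ) - ∫ ω, (if z < X ω then (1:ℝ) else 0) ∂μ :=
      integral_sub (by exact hg_int.add (integrable_const _)) hind_int
    have e2 : ∫ ω, (g ω + gaussTail z) ∂μ = (∫ ω, g ω ∂μ) + gaussTail z := by
      rw [integral_add hg_int (integrable_const _)]
      simp
    rw [integral_congr_ae hae, e1, e2, hind_val]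
  rw [hderiv_val]
  ring
end

section
/- Let X be a centered real random variable with E[X²] < ∞. Assume that both S₊(z) := P[X > z] and S₋(z) := P[−X > z] satisfy the Gaussian-comparison tail lower bound. Then Var[X] ≥ K_u := (√(1 + 2√(2π)) − 1)² / π² ≈ 0.21367. -/
open MeasureTheory Set intervalIntegral

/-- A tail function `S` satisfies the Gaussian-comparison tail lower bound if for all `z > 0`,
`S(z) ≥ Φ̄(z) − (1/(1+z²)) ∫_z^∞ 2x S(x) dx`. -/
def GaussCompLB (S : ℝ → ℝ) : Prop :=
  ∀ z : ℝ, 0 < z →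
    S z ≥ gaussTail z - (1 / (1 + z ^ 2)) * ∫ x in Set.Ioi z, 2 * x * S x

lemma gaussTail_ge {x : ℝ} (hx : 0 ≤ x) :
    gaussTail x ≥ 1/2 - x / Real.sqrt (2 * Real.pi) := by
  set s := Real.sqrt (2 * Real.pi) with hs_def
  have hs : 0 < s := Real.sqrt_pos.2 (by positivity)
  have hint : Integrable (fun t : ℝ => Real.exp (-t ^ 2 / 2)) := by
    have := integrable_exp_neg_mul_sq (b := (1/2 : ℝ)) (by norm_num)
    convert this using 2 with t
    ring_nf
  have h0 : ∫ t in Ioi (0:ℝ), Real.exp (-t ^ 2 / 2) = s / 2 := by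
    have h := integral_gaussian_Ioi (1/2)
    have h2 : ∀ t : ℝ, Real.exp (-(1/2) * t ^ 2) = Real.exp (-t ^ 2 / 2) := by
      intro t; ring_nf
    simp_rw [h2] at h
    rw [h, hs_def]
    congr 1
    ring
  have hsplit : (∫ t in Ioc (0:ℝ) x, Real.exp (-t ^ 2 / 2))
      + (∫ t in Ioi x, Real.exp (-t ^ 2 / 2)) = s / 2 := by
    rw [← h0, ← setIntegral_union (Set.Ioc_disjoint_Ioi le_rfl) measurableSet_Ioi
      hint.integrableOn hint.integrableOn, Set.Ioc_union_Ioi_eq_Ioi hx]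
  have h1 : (∫ t in Ioc (0:ℝ) x, Real.exp (-t ^ 2 / 2)) ≤ x := by
    calc (∫ t in Ioc (0:ℝ) x, Real.exp (-t ^ 2 / 2)) ≤ ∫ _ in Ioc (0:ℝ) x, (1:ℝ) := by
          apply setIntegral_mono_on hint.integrableOn (integrableOn_const (by simp))
            measurableSet_Ioc
          intro t _
          exact Real.exp_le_one_iff.2 (by nlinarith [sq_nonneg t])
      _ = x := by simp [Real.volume_Ioc, hx]
  have heq : gaussTail x = s⁻¹ * ∫ t in Ioi x, Real.exp (-t ^ 2 / 2) := rfl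
  rw [heq, ge_iff_le, ← sub_nonneg]
  have e : s⁻¹ * (∫ t in Ioi x, Real.exp (-t ^ 2 / 2)) - (1/2 - x/s)
      = s⁻¹ * ((∫ t in Ioi x, Real.exp (-t ^ 2 / 2)) - (s/2 - x)) := by
    field_simp
  rw [e]
  have h3 : 0 ≤ (∫ t in Ioi x, Real.exp (-t ^ 2 / 2)) - (s/2 - x) := by linarith
  positivity

lemma key_numeric :
    (Real.sqrt (1 + 2 * Real.sqrt (2 * Real.pi)) - 1) ^ 2 / Real.pi ^ 2
      ≤ (1 - 4 / (3 * Real.sqrt (2 * Real.pi))) / 2 := by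
  set s := Real.sqrt (2 * Real.pi) with hs_def
  have hs : 0 < s := Real.sqrt_pos.2 (by positivity)
  have hs2 : s ^ 2 = 2 * Real.pi := Real.sq_sqrt (by positivity)
  have hpi1 : 3.141592 < Real.pi := Real.pi_gt_d6
  have hpi2 : Real.pi < 3.141593 := Real.pi_lt_d6
  have hsl : 2.5066 < s := by nlinarith
  have hsu : s < 2.5067 := by nlinarith
  set r := Real.sqrt (1 + 2 * s) with hr_def
  have hr0 : 0 ≤ r := Real.sqrt_nonneg _
  have hr2 : r ^ 2 = 1 + 2 * s := Real.sq_sqrt (by positivity)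
  have hru : r < 2.4523 := by nlinarith
  have hrhs : (r - 1) ^ 2 / Real.pi ^ 2 ≤ 2.10917 / 9.8696 := by
    apply div_le_div₀ (by norm_num) ?_ (by positivity) ?_
    · nlinarith
    · nlinarith
  have h4 : 4 / (3 * s) ≤ 0.532 := by
    rw [div_le_iff₀ (by positivity)]
    nlinarith
  have hlhs : (0.234 : ℝ) ≤ (1 - 4 / (3 * s)) / 2 := by linarith
  nlinarith

/-- If a centered square-integrable random variable has both of its tails
`S₊(z) = P[X > z]` and `S₋(z) = P[−X > z]` satisfying the Gaussian-comparison tail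
lower bound, then `Var[X] ≥ K_u = (√(1 + 2√(2π)) − 1)²/π² ≈ 0.21367`. -/
theorem variance_lower_bound {Ω : Type*} {mΩ : MeasurableSpace Ω} (μ : Measure Ω)
    [IsProbabilityMeasure μ] (X : Ω → ℝ) (hXm : Measurable X)
    (hX2 : Integrable (fun ω => X ω ^ 2) μ) (hcen : ∫ ω, X ω ∂μ = 0)
    (hplus : GaussCompLB fun z => (μ {ω | z < X ω}).toReal)
    (hminus : GaussCompLB fun z => (μ {ω | z < -X ω}).toReal) :
    ProbabilityTheory.variance X μ ≥
      (Real.sqrt (1 + 2 * Real.sqrt (2 * Real.pi)) - 1) ^ 2 / Real.pi ^ 2 := by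
  set s := Real.sqrt (2 * Real.pi) with hs_def
  have hs : 0 < s := Real.sqrt_pos.2 (by positivity)
  set σ2 := ∫ ω, X ω ^ 2 ∂μ with hσ2_def
  set Sp : ℝ → ℝ := fun z => (μ {ω | z < X ω}).toReal with hSp_def
  set Sm : ℝ → ℝ := fun z => (μ {ω | z < -X ω}).toReal with hSm_def
  set F : ℝ → ℝ := fun x => 2 * x * (μ {ω | x < |X ω|}).toReal with hF_def
  have hSp_meas : Measurable Sp :=
    Antitone.measurable fun a b hab => ENNReal.toReal_mono (measure_ne_top μ _)
      (measure_mono (fun ω h => lt_of_le_of_lt hab h))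
  have hSm_meas : Measurable Sm :=
    Antitone.measurable fun a b hab => ENNReal.toReal_mono (measure_ne_top μ _)
      (measure_mono (fun ω h => lt_of_le_of_lt hab h))
  have hSabs_meas : Measurable (fun x : ℝ => (μ {ω | x < |X ω|}).toReal) :=
    Antitone.measurable fun a b hab => ENNReal.toReal_mono (measure_ne_top μ _)
      (measure_mono (fun ω h => lt_of_le_of_lt hab h))
  have hF_meas : Measurable F := (measurable_const.mul measurable_id).mul hSabs_meas
  -- layercake at lintegral level
  have key : ∫⁻ ω, ENNReal.ofReal (X ω ^ 2) ∂μ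
      = ∫⁻ t in Ioi 0, μ {a | t < |X a|} * ENNReal.ofReal (2 * t) := by
    have h := lintegral_comp_eq_lintegral_meas_lt_mul (f := fun ω => |X ω|)
      (g := fun t => 2 * t) μ (Filter.Eventually.of_forall fun ω => abs_nonneg _)
      hXm.abs.aemeasurable
      (fun t _ => (continuous_const.mul continuous_id).intervalIntegrable 0 t)
      ((ae_restrict_iff' measurableSet_Ioi).2
        (Filter.Eventually.of_forall fun t ht => by have := mem_Ioi.mp ht; positivity))
    rw [← h]
    refine lintegral_congr fun ω => ?_
    congr 1
    rw [intervalIntegral.integral_const_mul, integral_id]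
    rw [sq_abs]
    ring
  have keyF : ∫⁻ t in Ioi 0, ENNReal.ofReal (F t) = ∫⁻ ω, ENNReal.ofReal (X ω ^ 2) ∂μ := by
    rw [key]
    refine setLIntegral_congr_fun measurableSet_Ioi (fun t ht => ?_)
    have ht' : 0 < t := ht
    rw [hF_def]
    simp only
    rw [ENNReal.ofReal_mul (by positivity), ENNReal.ofReal_toReal (measure_ne_top μ _), mul_comm]
  have hF_nn : 0 ≤ᵐ[volume.restrict (Ioi 0)] F :=
    (ae_restrict_iff' measurableSet_Ioi).2
      (Filter.Eventually.of_forall fun x hx => by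
        have := mem_Ioi.mp hx
        have : (0:ℝ) ≤ 2 * x := by linarith
        exact mul_nonneg this ENNReal.toReal_nonneg)
  have hFint : IntegrableOn F (Ioi 0) := by
    refine ⟨hF_meas.aestronglyMeasurable.restrict, ?_⟩
    rw [hasFiniteIntegral_iff_ofReal hF_nn, keyF]
    exact hX2.lintegral_lt_top
  have hFeq : ∫ x in Ioi 0, F x = σ2 := by
    rw [hσ2_def,
      integral_eq_lintegral_of_nonneg_ae hF_nn hF_meas.aestronglyMeasurable.restrict,
      integral_eq_lintegral_of_nonneg_ae (Filter.Eventually.of_forall fun ω => sq_nonneg _)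
        (hXm.pow_const 2).aestronglyMeasurable,
      keyF]
  -- splitting of the two-sided tail
  have hsplit : ∀ x : ℝ, 0 < x → F x = 2 * x * Sp x + 2 * x * Sm x := by
    intro x hx
    have hset : {ω | x < |X ω|} = {ω | x < X ω} ∪ {ω | x < -X ω} := by
      ext ω; simp [lt_abs]
    have hdisj : Disjoint {ω | x < X ω} {ω | x < -X ω} := by
      rw [Set.disjoint_left]
      intro ω h1 h2
      simp only [mem_setOf_eq] at h1 h2
      linarith
    rw [hF_def]
    simp only
    rw [hset, measure_union hdisj (measurableSet_lt measurable_const hXm.neg),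
      ENNReal.toReal_add (measure_ne_top μ _) (measure_ne_top μ _)]
    ring
  -- integrability of one-sided layer functions
  have hGp_int : IntegrableOn (fun x => 2 * x * Sp x) (Ioi 0) := by
    refine Integrable.mono' hFint
      (((measurable_const.mul measurable_id).mul hSp_meas).aestronglyMeasurable.restrict) ?_
    rw [ae_restrict_iff' measurableSet_Ioi]
    refine Filter.Eventually.of_forall fun x hx => ?_
    have hx' := mem_Ioi.mp hx
    have h2x : (0:ℝ) ≤ 2 * x := by linarith
    rw [Real.norm_eq_abs, abs_of_nonneg (mul_nonneg h2x ENNReal.toReal_nonneg), hsplit x hx']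
    have : 0 ≤ 2 * x * Sm x := mul_nonneg h2x ENNReal.toReal_nonneg
    linarith
  have hGm_int : IntegrableOn (fun x => 2 * x * Sm x) (Ioi 0) := by
    refine Integrable.mono' hFint
      (((measurable_const.mul measurable_id).mul hSm_meas).aestronglyMeasurable.restrict) ?_
    rw [ae_restrict_iff' measurableSet_Ioi]
    refine Filter.Eventually.of_forall fun x hx => ?_
    have hx' := mem_Ioi.mp hx
    have h2x : (0:ℝ) ≤ 2 * x := by linarith
    rw [Real.norm_eq_abs, abs_of_nonneg (mul_nonneg h2x ENNReal.toReal_nonneg), hsplit x hx']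
    have : 0 ≤ 2 * x * Sp x := mul_nonneg h2x ENNReal.toReal_nonneg
    linarith
  -- tail-mass bound
  have hT : ∀ z : ℝ, 0 < z →
      (∫ x in Ioi z, 2 * x * Sp x) + (∫ x in Ioi z, 2 * x * Sm x) ≤ σ2 := by
    intro z hz
    have hsub : Ioi z ⊆ Ioi 0 := Ioi_subset_Ioi hz.le
    have h1 : (∫ x in Ioi z, 2 * x * Sp x) + (∫ x in Ioi z, 2 * x * Sm x)
        = ∫ x in Ioi z, F x := by
      rw [← integral_add (hGp_int.mono_set hsub) (hGm_int.mono_set hsub)]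
      exact setIntegral_congr_fun measurableSet_Ioi fun x hx => (hsplit x (hz.trans hx)).symm
    rw [h1, ← hFeq]
    exact setIntegral_mono_set hFint hF_nn (HasSubset.Subset.eventuallyLE hsub)
  have hσ2nn : 0 ≤ σ2 := integral_nonneg fun ω => sq_nonneg _
  -- pointwise lower bound on (0,1)
  have hpt : ∀ x ∈ Ioo (0:ℝ) 1,
      2 * x - 4 / s * x ^ 2 - 2 * x * σ2 ≤ 2 * x * Sp x + 2 * x * Sm x := by
    intro x hx
    obtain ⟨hx0, hx1⟩ := hx
    have hp := hplus x hx0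
    have hm := hminus x hx0
    have hTp : 0 ≤ ∫ t in Ioi x, 2 * t * Sp t :=
      setIntegral_nonneg measurableSet_Ioi fun t ht =>
        mul_nonneg (by have := mem_Ioi.mp ht; linarith) ENNReal.toReal_nonneg
    have hTm : 0 ≤ ∫ t in Ioi x, 2 * t * Sm t :=
      setIntegral_nonneg measurableSet_Ioi fun t ht =>
        mul_nonneg (by have := mem_Ioi.mp ht; linarith) ENNReal.toReal_nonneg
    have hc : (1:ℝ) / (1 + x ^ 2) ≤ 1 := by
      rw [div_le_one (by positivity)]; nlinarith
    have hc0 : 0 < (1:ℝ) / (1 + x ^ 2) := by positivity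
    have h1 : Sp x ≥ gaussTail x - (∫ t in Ioi x, 2 * t * Sp t) := by
      have := mul_le_mul_of_nonneg_right hc hTp
      rw [one_mul] at this
      linarith
    have h2 : Sm x ≥ gaussTail x - (∫ t in Ioi x, 2 * t * Sm t) := by
      have := mul_le_mul_of_nonneg_right hc hTm
      rw [one_mul] at this
      linarith
    have h3 : Sp x + Sm x ≥ 2 * gaussTail x - σ2 := by
      have := hT x hx0
      linarith
    have hg := gaussTail_ge hx0.le
    rw [← hs_def] at hg
    have hxs : 2 * x / s = 2 * (x / s) := by ring
    have h4 : Sp x + Sm x ≥ 1 - 2 * x / s - σ2 := by linarith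
    have h5 := mul_le_mul_of_nonneg_left h4 (by linarith : (0:ℝ) ≤ 2 * x)
    have hexp : 2 * x * (1 - 2 * x / s - σ2) = 2 * x - 4 / s * x ^ 2 - 2 * x * σ2 := by
      field_simp; ring
    nlinarith [h5]
  -- integral chain
  have hioo_sub : Ioo (0:ℝ) 1 ⊆ Ioi 0 := fun x hx => hx.1
  have step1 : ∫ x in Ioo (0:ℝ) 1, F x ≤ σ2 := by
    rw [← hFeq]
    exact setIntegral_mono_set hFint hF_nn (HasSubset.Subset.eventuallyLE hioo_sub)
  have step2 : ∫ x in Ioo (0:ℝ) 1, F x = ∫ x in Ioo (0:ℝ) 1, (2 * x * Sp x + 2 * x * Sm x) :=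
    setIntegral_congr_fun measurableSet_Ioo fun x hx => hsplit x hx.1
  have hpoly_cont : Continuous (fun x : ℝ => 2 * x - 4 / s * x ^ 2 - 2 * x * σ2) := by
    fun_prop
  have hpoly_int : IntegrableOn (fun x : ℝ => 2 * x - 4 / s * x ^ 2 - 2 * x * σ2) (Ioo 0 1) :=
    (hpoly_cont.integrableOn_Icc).mono_set Ioo_subset_Icc_self
  have step3 : (∫ x in Ioo (0:ℝ) 1, (2 * x - 4 / s * x ^ 2 - 2 * x * σ2))
      ≤ ∫ x in Ioo (0:ℝ) 1, (2 * x * Sp x + 2 * x * Sm x) :=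
    setIntegral_mono_on hpoly_int
      ((hGp_int.mono_set hioo_sub).add (hGm_int.mono_set hioo_sub)) measurableSet_Ioo hpt
  have step4 : (∫ x in Ioo (0:ℝ) 1, (2 * x - 4 / s * x ^ 2 - 2 * x * σ2))
      = 1 - 4 / (3 * s) - σ2 := by
    rw [← integral_Ioc_eq_integral_Ioo, ← intervalIntegral.integral_of_le zero_le_one]
    have i1 : IntervalIntegrable (fun x : ℝ => 2 * x) volume 0 1 :=
      (by fun_prop : Continuous fun x : ℝ => 2 * x).intervalIntegrable 0 1
    have i2 : IntervalIntegrable (fun x : ℝ => 4 / s * x ^ 2) volume 0 1 :=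
      (by fun_prop : Continuous fun x : ℝ => 4 / s * x ^ 2).intervalIntegrable 0 1
    have i3 : IntervalIntegrable (fun x : ℝ => 2 * x * σ2) volume 0 1 :=
      (by fun_prop : Continuous fun x : ℝ => 2 * x * σ2).intervalIntegrable 0 1
    rw [integral_sub (i1.sub i2) i3, integral_sub i1 i2]
    have e1 : (∫ x in (0:ℝ)..1, 2 * x) = 1 := by
      rw [intervalIntegral.integral_const_mul, integral_id]; norm_num
    have e2 : (∫ x in (0:ℝ)..1, 4 / s * x ^ 2) = 4 / s * (1/3) := by
      rw [intervalIntegral.integral_const_mul, integral_pow]; norm_num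
    have e3 : (∫ x in (0:ℝ)..1, 2 * x * σ2) = σ2 := by
      rw [intervalIntegral.integral_mul_const, e1, one_mul]
    rw [e1, e2, e3]
    have : 4 / s * (1/3) = 4 / (3 * s) := by
      field_simp
    rw [this]
  have final : 1 - 4 / (3 * s) - σ2 ≤ σ2 := by
    rw [← step4]
    calc (∫ x in Ioo (0:ℝ) 1, (2 * x - 4 / s * x ^ 2 - 2 * x * σ2))
        ≤ ∫ x in Ioo (0:ℝ) 1, (2 * x * Sp x + 2 * x * Sm x) := step3
      _ = ∫ x in Ioo (0:ℝ) 1, F x := step2.symm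
      _ ≤ σ2 := step1
  have hσ2_ge : (1 - 4 / (3 * s)) / 2 ≤ σ2 := by linarith
  have hmem : MemLp X 2 μ := (memLp_two_iff_integrable_sq hXm.aestronglyMeasurable).2 hX2
  have hvar : ProbabilityTheory.variance X μ = σ2 := by
    rw [ProbabilityTheory.variance_eq_sub hmem]
    simp only [Pi.pow_apply]
    rw [hcen, hσ2_def]
    ring
  rw [ge_iff_le, hvar]
  exact key_numeric.trans hσ2_ge
end

section
/- Let X be a real random variable with tail S(z) := P[X > z], and let c > 2 and z₀ > 0. Assume that S satisfies the Gaussian-comparison tail lower bound and that S(x) ≤ x^{−c} for all x ≥ z₀. Then for every z ≥ z₀: sup_{x ≥ z} x^c P[X > x] ≥ ((c − 2)/c) · z^c Φ̄(z). -/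
open MeasureTheory

/-- If the tail `S(z) = P[X > z]` satisfies the Gaussian-comparison lower bound and
`S(x) ≤ x^{−c}` for `x ≥ z₀` with `c > 2`, then for every `z ≥ z₀`,
`sup_{x ≥ z} x^c P[X > x] ≥ ((c−2)/c) z^c Φ̄(z)`. -/
theorem sup_tail_lower_bound {Ω : Type*} {mΩ : MeasurableSpace Ω} (μ : Measure Ω)
    [IsProbabilityMeasure μ] (X : Ω → ℝ) (hXm : Measurable X)
    (S : ℝ → ℝ) (hS : ∀ z : ℝ, S z = (μ {ω | z < X ω}).toReal)
    (c z₀ : ℝ) (hc : 2 < c) (hz₀ : 0 < z₀)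
    (hGCB : GaussCompLB S)
    (hpoly : ∀ x : ℝ, z₀ ≤ x → S x ≤ x ^ (-c)) :
    ∀ z : ℝ, z₀ ≤ z →
      sSup {y : ℝ | ∃ x : ℝ, z ≤ x ∧ y = x ^ c * S x} ≥
        (c - 2) / c * (z ^ c * gaussTail z) := by
  intro z hz
  have hz0 : 0 < z := lt_of_lt_of_le hz₀ hz
  have hSnn : ∀ x : ℝ, 0 ≤ S x := fun x => by rw [hS]; exact ENNReal.toReal_nonneg
  have hSanti : Antitone S := by
    intro a b hab
    rw [hS, hS]
    exact ENNReal.toReal_mono (measure_ne_top μ _)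
      (measure_mono (fun ω hω => lt_of_le_of_lt hab hω))
  set T : Set ℝ := {y : ℝ | ∃ x : ℝ, z ≤ x ∧ y = x ^ c * S x} with hT
  set M : ℝ := sSup T with hM
  -- every element of T is ≤ 1
  have hbdd : ∀ y ∈ T, y ≤ (1 : ℝ) := by
    rintro y ⟨x, hx, rfl⟩
    have hx0 : 0 < x := lt_of_lt_of_le hz0 hx
    calc x ^ c * S x ≤ x ^ c * x ^ (-c) := by
          exact mul_le_mul_of_nonneg_left (hpoly x (le_trans hz hx))
            (Real.rpow_nonneg hx0.le c)
      _ = 1 := by rw [← Real.rpow_add hx0]; simp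
  have hbddA : BddAbove T := ⟨1, hbdd⟩
  have hub : ∀ x : ℝ, z ≤ x → x ^ c * S x ≤ M :=
    fun x hx => le_csSup hbddA ⟨x, hx, rfl⟩
  have hM0 : 0 ≤ M :=
    le_trans (mul_nonneg (Real.rpow_nonneg hz0.le c) (hSnn z)) (hub z le_rfl)
  -- bound the integral
  set I : ℝ := ∫ x in Set.Ioi z, 2 * x * S x with hI
  have hgint : IntegrableOn (fun x : ℝ => 2 * M * x ^ (1 - c)) (Set.Ioi z) :=
    ((integrableOn_Ioi_rpow_of_lt (by linarith) hz0).const_mul (2 * M))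
  have hfmeas : Measurable (fun x : ℝ => 2 * x * S x) :=
    (measurable_const.mul measurable_id).mul hSanti.measurable
  have hfle : ∀ x ∈ Set.Ioi z, 2 * x * S x ≤ 2 * M * x ^ (1 - c) := by
    intro x hx
    have hx0 : 0 < x := lt_trans hz0 hx
    have hSx : S x ≤ M * x ^ (-c) := by
      have := hub x (le_of_lt hx)
      have h1 : x ^ c * S x * x ^ (-c) ≤ M * x ^ (-c) :=
        mul_le_mul_of_nonneg_right this (Real.rpow_nonneg hx0.le _)
      calc S x = x ^ c * S x * x ^ (-c) := by
            rw [mul_comm (x ^ c) (S x), mul_assoc, ← Real.rpow_add hx0]; simp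
        _ ≤ M * x ^ (-c) := h1
    calc 2 * x * S x ≤ 2 * x * (M * x ^ (-c)) :=
          mul_le_mul_of_nonneg_left hSx (by positivity)
      _ = 2 * M * (x * x ^ (-c)) := by ring
      _ = 2 * M * x ^ (1 - c) := by
          rw [show (1 : ℝ) - c = 1 + (-c) by ring, Real.rpow_add hx0, Real.rpow_one]
  have hfint : IntegrableOn (fun x : ℝ => 2 * x * S x) (Set.Ioi z) := by
    apply hgint.mono' hfmeas.aestronglyMeasurable
    filter_upwards [ae_restrict_mem measurableSet_Ioi] with x hx
    have hx0 : 0 < x := lt_trans hz0 hx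
    rw [Real.norm_eq_abs, abs_of_nonneg (mul_nonneg (by positivity) (hSnn x))]
    exact hfle x hx
  have hIle : I ≤ 2 * M * (z ^ (2 - c) / (c - 2)) := by
    have := setIntegral_mono_on hfint hgint measurableSet_Ioi hfle
    rw [integral_const_mul, integral_Ioi_rpow_of_lt (by linarith) hz0] at this
    calc I ≤ 2 * M * (-z ^ (1 - c + 1) / (1 - c + 1)) := this
      _ = 2 * M * (z ^ (2 - c) / (c - 2)) := by
          rw [show (1 : ℝ) - c + 1 = 2 - c by ring]
          rw [show c - 2 = -(2 - c) by ring, div_neg, neg_div]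
  have hInn : 0 ≤ I := by
    apply setIntegral_nonneg measurableSet_Ioi
    intro x hx
    have hx0 : 0 < x := lt_trans hz0 hx
    exact mul_nonneg (by positivity) (hSnn x)
  -- main chain
  have hGC := hGCB z hz0
  rw [← hI] at hGC
  have hzc : 0 < z ^ c := Real.rpow_pos_of_pos hz0 c
  have key : z ^ c * S z ≥ z ^ c * gaussTail z - 2 * M / (c - 2) := by
    have h1 : z ^ c * S z ≥ z ^ c * gaussTail z - z ^ c * ((1 / (1 + z ^ 2)) * I) := by
      nlinarith [mul_le_mul_of_nonneg_left hGC hzc.le]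
    have h2 : z ^ c * ((1 / (1 + z ^ 2)) * I) ≤ 2 * M / (c - 2) := by
      have hden : 0 < 1 + z ^ 2 := by positivity
      have h3 : z ^ c * ((1 / (1 + z ^ 2)) * I)
          ≤ z ^ c * ((1 / (1 + z ^ 2)) * (2 * M * (z ^ (2 - c) / (c - 2)))) := by
        apply mul_le_mul_of_nonneg_left _ hzc.le
        exact mul_le_mul_of_nonneg_left hIle (by positivity)
      have h4 : z ^ c * z ^ (2 - c) = z ^ (2 : ℝ) := by
        rw [← Real.rpow_add hz0]; ring_nf
      have h5 : z ^ (2 : ℝ) = z ^ 2 := by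
        rw [show ((2 : ℝ) : ℝ) = ((2 : ℕ) : ℝ) by norm_num, Real.rpow_natCast]
      have h6 : z ^ c * ((1 / (1 + z ^ 2)) * (2 * M * (z ^ (2 - c) / (c - 2))))
          = (2 * M / (c - 2)) * (z ^ 2 / (1 + z ^ 2)) := by
        rw [show z ^ c * ((1 / (1 + z ^ 2)) * (2 * M * (z ^ (2 - c) / (c - 2))))
            = (2 * M / (c - 2)) * ((z ^ c * z ^ (2 - c)) / (1 + z ^ 2)) by ring, h4, h5]
      have h7 : z ^ 2 / (1 + z ^ 2) ≤ 1 := by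
        rw [div_le_one hden]; linarith
      have h8 : (2 * M / (c - 2)) * (z ^ 2 / (1 + z ^ 2)) ≤ 2 * M / (c - 2) := by
        nlinarith [div_nonneg (mul_nonneg (by norm_num : (0:ℝ) ≤ 2) hM0) (by linarith : (0:ℝ) ≤ c - 2),
          div_nonneg (sq_nonneg z) hden.le]
      rw [h6] at h3
      exact le_trans h3 h8
    linarith
  have hMS : z ^ c * S z ≤ M := hub z le_rfl
  have hfin : M + 2 * M / (c - 2) ≥ z ^ c * gaussTail z := by linarith
  rw [ge_iff_le, div_mul_eq_mul_div, div_le_iff₀ (by linarith : (0:ℝ) < c)]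
  have hc2 : 0 < c - 2 := by linarith
  have hEq : 2 * M / (c - 2) * (c - 2) = 2 * M := div_mul_cancel₀ _ (ne_of_gt hc2)
  nlinarith [mul_le_mul_of_nonneg_right hfin.le hc2.le, hEq]
end

section
/- In the density-representation setting, for every x > 0 one has the exact tail formula: P[X > x] = (E|X|/2) · ( A(x)/x − ∫_x^∞ A(y)/y² dy ). -/
open MeasureTheory


lemma exp_lip {a b : ℝ} (ha : 0 ≤ a) (hb : 0 ≤ b) :
    |Real.exp (-a) - Real.exp (-b)| ≤ |a - b| := by
  wlog hab : a ≤ b generalizing a b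
  · rw [abs_sub_comm, abs_sub_comm a b]; exact this hb ha (le_of_not_ge hab)
  have h1 : Real.exp (-b) ≤ Real.exp (-a) := Real.exp_le_exp.mpr (by linarith)
  rw [abs_of_nonneg (by linarith), abs_of_nonpos (by linarith)]
  have h2 : Real.exp (-a) - Real.exp (-b) = Real.exp (-a) * (1 - Real.exp (-(b - a))) := by
    rw [mul_sub, mul_one, ← Real.exp_add]; ring_nf
  rw [h2]
  have h3 : 1 - Real.exp (-(b - a)) ≤ b - a := by
    have := Real.add_one_le_exp (-(b - a)); linarith
  have h4 : Real.exp (-a) ≤ 1 := Real.exp_le_one_iff.mpr (by linarith)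
  have h5 : 0 ≤ 1 - Real.exp (-(b - a)) := by
    have : Real.exp (-(b - a)) ≤ 1 := Real.exp_le_one_iff.mpr (by linarith)
    linarith
  calc Real.exp (-a) * (1 - Real.exp (-(b - a))) ≤ 1 * (b - a) := by
        apply mul_le_mul h4 h3 h5 zero_le_one
    _ = -(a - b) := by ring

open Set in
lemma key_exp_integral (h : ℝ → ℝ) (hint : Integrable h (volume : Measure ℝ))
    (h0 : ∀ y, 0 ≤ h y) (x t : ℝ) (hxt : x ≤ t) :
    ∫ y in x..t, h y * Real.exp (-∫ s in x..y, h s)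
      = 1 - Real.exp (-∫ s in x..t, h s) := by
  set M : ℝ → ℝ := fun y => ∫ s in x..y, h s with hMdef
  have hMc : Continuous M :=
    intervalIntegral.continuous_primitive (fun a b => hint.intervalIntegrable) x
  have hM0 : ∀ y, x ≤ y → 0 ≤ M y := fun y hy =>
    intervalIntegral.integral_nonneg hy fun s _ => h0 s
  have hintM : IntervalIntegrable (fun y => h y * Real.exp (-M y)) volume x t :=
    hint.intervalIntegrable.mul_continuousOn (hMc.neg.rexp).continuousOn
  have hB : (0:ℝ) ≤ ∫ y, |h y| := integral_nonneg fun y => abs_nonneg _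
  set B : ℝ := ∫ y, |h y| with hBdef
  apply eq_of_forall_dist_le
  intro ε hε
  set δ : ℝ := min 1 (ε / (3 + B)) with hδdef
  have hδpos : 0 < δ := lt_min one_pos (div_pos hε (by linarith))
  have hδ1 : δ ≤ 1 := min_le_left _ _
  have hδε : δ * (3 + B) ≤ ε := by
    have : δ ≤ ε / (3 + B) := min_le_right _ _
    calc δ * (3 + B) ≤ ε / (3 + B) * (3 + B) := by nlinarith
      _ = ε := div_mul_cancel₀ ε (by linarith)
  obtain ⟨g, hgsupp, hgclose, hgcont, hgint⟩ :=
    hint.exists_hasCompactSupport_integral_sub_le hδpos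
  set k : ℝ → ℝ := fun y => max (g y) 0 with hkdef
  have hkcont : Continuous k := hgcont.max continuous_const
  have hkint : Integrable k (volume : Measure ℝ) := hgint.pos_part
  have hk0 : ∀ y, 0 ≤ k y := fun y => le_max_right _ _
  have hclose : ∀ y, |h y - k y| ≤ |h y - g y| := by
    intro y
    rcases le_total (g y) 0 with hg0 | hg0
    · have : k y = 0 := max_eq_right hg0
      rw [this, sub_zero, abs_of_nonneg (h0 y)]
      calc h y ≤ h y - g y := by linarith
        _ ≤ |h y - g y| := le_abs_self _
    · have : k y = g y := max_eq_left hg0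
      rw [this]
  have hdist : ∫ y, |h y - k y| ≤ δ := by
    refine le_trans (integral_mono (hint.sub hkint).abs (hint.sub hgint).abs hclose) ?_
    simpa [Real.norm_eq_abs] using hgclose
  set N : ℝ → ℝ := fun y => ∫ s in x..y, k s with hNdef
  have hNc : Continuous N :=
    intervalIntegral.continuous_primitive (fun a b => hkint.intervalIntegrable) x
  have hN0 : ∀ y, x ≤ y → 0 ≤ N y := fun y hy =>
    intervalIntegral.integral_nonneg hy fun s _ => hk0 s
  have hMN : ∀ y, x ≤ y → |M y - N y| ≤ δ := by
    intro y hy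
    have hsub : M y - N y = ∫ s in x..y, (h s - k s) :=
      (intervalIntegral.integral_sub (hint.intervalIntegrable) (hkint.intervalIntegrable)).symm
    rw [hsub]
    calc |∫ s in x..y, (h s - k s)| ≤ ∫ s in x..y, |h s - k s| := by
          simpa [Real.norm_eq_abs] using
            intervalIntegral.norm_integral_le_integral_norm (f := fun s => h s - k s) (μ := volume) hy
      _ = ∫ s in Ioc x y, |h s - k s| := intervalIntegral.integral_of_le hy
      _ ≤ ∫ s, |h s - k s| := setIntegral_le_integral (hint.sub hkint).abs
          (Filter.Eventually.of_forall fun s => abs_nonneg _)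
      _ ≤ δ := hdist
  have hder : ∀ y, HasDerivAt N (k y) y := fun y =>
    intervalIntegral.integral_hasDerivAt_right hkint.intervalIntegrable
      (hkcont.stronglyMeasurableAtFilter _ _) hkcont.continuousAt
  have hΦ : ∀ y ∈ uIcc x t, HasDerivAt (fun u => -Real.exp (-N u))
      (k y * Real.exp (-N y)) y := by
    intro y _
    have h1 : HasDerivAt (fun u => -N u) (-k y) y := (hder y).neg
    have h2 : HasDerivAt (fun u => Real.exp (-N u)) (Real.exp (-N y) * (-k y)) y := h1.exp
    have h3 := h2.neg
    have h4 : k y * Real.exp (-N y) = -(Real.exp (-N y) * -k y) := by ring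
    rw [h4]; exact h3
  have hFTC : ∫ y in x..t, k y * Real.exp (-N y) = 1 - Real.exp (-N t) := by
    rw [intervalIntegral.integral_eq_sub_of_hasDerivAt hΦ
      ((hkcont.mul (hNc.neg.rexp)).intervalIntegrable x t)]
    have : N x = 0 := intervalIntegral.integral_same
    rw [this]
    simp only [neg_zero, Real.exp_zero]
    ring
  -- error estimates
  have hktint : IntervalIntegrable (fun y => k y * Real.exp (-N y)) volume x t :=
    ((hkcont.mul (hNc.neg.rexp)).intervalIntegrable x t)
  have hkI : ∫ y in x..t, k y ≤ B + δ := by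
    have h1 : ∫ y in x..t, k y = ∫ y in Ioc x t, k y := intervalIntegral.integral_of_le hxt
    have h2 : ∫ y in Ioc x t, k y ≤ ∫ y, k y := setIntegral_le_integral hkint
      (Filter.Eventually.of_forall hk0)
    have h3 : ∫ y, k y ≤ B + δ := by
      have e1 : ∀ y, k y ≤ |h y| + |h y - k y| := by
        intro y
        have := abs_sub_abs_le_abs_sub (k y) (h y)
        have hk : |k y| = k y := abs_of_nonneg (hk0 y)
        have : k y - |h y| ≤ |h y - k y| := by rw [abs_sub_comm]; linarith
        linarith
      calc ∫ y, k y ≤ ∫ y, (|h y| + |h y - k y|) :=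
            integral_mono hkint (hint.abs.add (hint.sub hkint).abs) e1
        _ = B + ∫ y, |h y - k y| := integral_add hint.abs (hint.sub hkint).abs
        _ ≤ B + δ := by linarith
    linarith
  have key1 : |(∫ y in x..t, h y * Real.exp (-M y)) - ∫ y in x..t, k y * Real.exp (-N y)|
      ≤ δ + (B + δ) * δ := by
    rw [← intervalIntegral.integral_sub hintM hktint]
    have bound : ∀ y ∈ Icc x t,
        |h y * Real.exp (-M y) - k y * Real.exp (-N y)| ≤ |h y - k y| + k y * δ := by
      intro y hy
      have e1 : h y * Real.exp (-M y) - k y * Real.exp (-N y)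
          = (h y - k y) * Real.exp (-M y) + k y * (Real.exp (-M y) - Real.exp (-N y)) := by ring
      have e2 : Real.exp (-M y) ≤ 1 := Real.exp_le_one_iff.mpr (by
        have := hM0 y hy.1; linarith)
      have e3 : |Real.exp (-M y) - Real.exp (-N y)| ≤ δ :=
        le_trans (exp_lip (hM0 y hy.1) (hN0 y hy.1)) (hMN y hy.1)
      calc |h y * Real.exp (-M y) - k y * Real.exp (-N y)|
          ≤ |(h y - k y) * Real.exp (-M y)| + |k y * (Real.exp (-M y) - Real.exp (-N y))| := by
            rw [e1]; exact abs_add_le _ _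
        _ ≤ |h y - k y| + k y * δ := by
            rw [abs_mul, abs_mul]
            have p1 : |h y - k y| * |Real.exp (-M y)| ≤ |h y - k y| * 1 := by
              apply mul_le_mul_of_nonneg_left _ (abs_nonneg _)
              rw [abs_of_nonneg (Real.exp_pos _).le]; exact e2
            have p2 : |k y| * |Real.exp (-M y) - Real.exp (-N y)| ≤ k y * δ := by
              rw [abs_of_nonneg (hk0 y)]
              exact mul_le_mul_of_nonneg_left e3 (hk0 y)
            linarith
    calc |∫ y in x..t, (h y * Real.exp (-M y) - k y * Real.exp (-N y))|
        ≤ ∫ y in x..t, |h y * Real.exp (-M y) - k y * Real.exp (-N y)| := by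
          simpa [Real.norm_eq_abs] using
            intervalIntegral.norm_integral_le_integral_norm
              (f := fun y => h y * Real.exp (-M y) - k y * Real.exp (-N y)) (μ := volume) hxt
      _ ≤ ∫ y in x..t, (|h y - k y| + k y * δ) := by
          apply intervalIntegral.integral_mono_on hxt ((hintM.sub hktint).abs)
            (((hint.sub hkint).abs.intervalIntegrable).add (hkint.intervalIntegrable.mul_const δ))
            bound
      _ = (∫ y in x..t, |h y - k y|) + ∫ y in x..t, k y * δ :=
          intervalIntegral.integral_add ((hint.sub hkint).abs.intervalIntegrable)
            (hkint.intervalIntegrable.mul_const δ)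
      _ ≤ δ + (B + δ) * δ := by
          have p1 : ∫ y in x..t, |h y - k y| ≤ δ := by
            rw [intervalIntegral.integral_of_le hxt]
            exact le_trans (setIntegral_le_integral (hint.sub hkint).abs
              (Filter.Eventually.of_forall fun s => abs_nonneg _)) hdist
          have p2 : ∫ y in x..t, k y * δ = (∫ y in x..t, k y) * δ :=
            intervalIntegral.integral_mul_const δ _
          have p3 : (∫ y in x..t, k y) * δ ≤ (B + δ) * δ :=
            mul_le_mul_of_nonneg_right hkI hδpos.le
          linarith
  have key2 : |Real.exp (-N t) - Real.exp (-M t)| ≤ δ := by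
    refine le_trans (exp_lip (hN0 t hxt) (hM0 t hxt)) ?_
    rw [abs_sub_comm]; exact hMN t hxt
  rw [Real.dist_eq]
  have tri : |(∫ y in x..t, h y * Real.exp (-M y)) - (1 - Real.exp (-M t))|
      ≤ |(∫ y in x..t, h y * Real.exp (-M y)) - ∫ y in x..t, k y * Real.exp (-N y)|
        + |(∫ y in x..t, k y * Real.exp (-N y)) - (1 - Real.exp (-M t))| := abs_sub_le _ _ _
  have last : |(∫ y in x..t, k y * Real.exp (-N y)) - (1 - Real.exp (-M t))| ≤ δ := by
    rw [hFTC]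
    have e : (1 - Real.exp (-N t)) - (1 - Real.exp (-M t))
        = Real.exp (-M t) - Real.exp (-N t) := by ring
    rw [e, abs_sub_comm]
    exact key2
  have hδδ : δ * δ ≤ δ := by nlinarith
  nlinarith

/-- **Density-representation setting** (Nourdin–Viens): `X` is a centered integrable random
variable whose law has Lebesgue density `ρ`, positive on `(a, ∞)` (with `−∞ ≤ a < 0`) and
vanishing outside; `g > 0` on `(a, ∞)` with `y ↦ y/g(y)` locally integrable there;
`A(x) = exp(−∫_0^x y/g(y) dy)`; and `ρ(x) = (E|X|/2) A(x)/g(x)` a.e. on `(a, ∞)`. -/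
theorem exact_tail_formula {Ω : Type*} {mΩ : MeasurableSpace Ω} (μ : Measure Ω)
    [IsProbabilityMeasure μ] (X : Ω → ℝ) (hXm : Measurable X)
    (hXint : Integrable X μ) (hcen : ∫ ω, X ω ∂μ = 0)
    (ρ g : ℝ → ℝ) (a : EReal) (ha : a < 0)
    (hmap : Measure.map X μ = volume.withDensity fun x => ENNReal.ofReal (ρ x))
    (hρpos : ∀ x : ℝ, a < (x : EReal) → 0 < ρ x)
    (hρzero : ∀ x : ℝ, (x : EReal) ≤ a → ρ x = 0)
    (hgpos : ∀ x : ℝ, a < (x : EReal) → 0 < g x)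
    (hloc : ∀ u v : ℝ, a < (u : EReal) → IntegrableOn (fun y => y / g y) (Set.Icc u v) volume)
    (A : ℝ → ℝ) (hA : ∀ x : ℝ, A x = Real.exp (-∫ y in (0 : ℝ)..x, y / g y))
    (hρA : ∀ᵐ x : ℝ ∂volume, a < (x : EReal) →
      ρ x = (∫ ω, |X ω| ∂μ) / 2 * A x / g x)
    :
    ∀ x : ℝ, 0 < x →
      (μ {ω | x < X ω}).toReal =
        (∫ ω, |X ω| ∂μ) / 2 * (A x / x - ∫ y in Set.Ioi x, A y / y ^ 2) := by

  intro x hx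
  set C : ℝ := (∫ ω, |X ω| ∂μ) / 2 with hCdef
  have hC0 : 0 ≤ C := div_nonneg (integral_nonneg fun ω => abs_nonneg _) two_pos.le
  set h : ℝ → ℝ := fun y => y / g y with hhdef
  have hax : ∀ u : ℝ, 0 ≤ u → a < (u : EReal) := fun u hu =>
    lt_of_lt_of_le ha (by rw [← EReal.coe_zero]; exact_mod_cast hu)
  have hgp : ∀ u : ℝ, 0 < u → 0 < g u := fun u hu => hgpos u (hax u hu.le)
  have hh0 : ∀ u : ℝ, 0 < u → 0 ≤ h u := fun u hu => div_nonneg hu.le (hgp u hu).le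
  have hInt : ∀ u v : ℝ, 0 ≤ u → u ≤ v → IntervalIntegrable h volume u v := by
    intro u v hu huv
    apply MeasureTheory.IntegrableOn.intervalIntegrable
    rw [Set.uIcc_of_le huv]
    exact hloc u v (hax u hu)
  have hApos : ∀ y, 0 < A y := fun y => (hA y) ▸ Real.exp_pos _
  have hIadd : ∀ t, x ≤ t →
      (∫ s in (0:ℝ)..t, h s) = (∫ s in (0:ℝ)..x, h s) + ∫ s in x..t, h s := fun t ht =>
    (intervalIntegral.integral_add_adjacent_intervals (hInt 0 x le_rfl hx.le)
      (hInt x t hx.le ht)).symm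
  have hAmul : ∀ t, x ≤ t → A t = A x * Real.exp (-∫ s in x..t, h s) := by
    intro t ht
    rw [hA t, hA x, ← Real.exp_add]
    congr 1
    rw [hIadd t ht]
    ring
  have hAle : ∀ t, x ≤ t → A t ≤ A x := by
    intro t ht
    rw [hAmul t ht]
    have h1 : (0:ℝ) ≤ ∫ s in x..t, h s :=
      intervalIntegral.integral_nonneg ht fun s hs => hh0 s (lt_of_lt_of_le hx hs.1)
    have h2 : Real.exp (-∫ s in x..t, h s) ≤ 1 := Real.exp_le_one_iff.mpr (by linarith)
    calc A x * Real.exp (-∫ s in x..t, h s) ≤ A x * 1 :=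
          mul_le_mul_of_nonneg_left h2 (hApos x).le
      _ = A x := mul_one _
  -- continuity of A on compact pieces
  have hAcont : ∀ t, x ≤ t → ContinuousOn A (Set.Icc x t) := by
    intro t ht
    have h1 : ContinuousOn (fun y => ∫ s in (0:ℝ)..y, h s) (Set.Icc 0 t) := by
      have := intervalIntegral.continuousOn_primitive_interval
        (μ := volume) (f := h) (a := 0) (b := t)
        (by rw [Set.uIcc_of_le (hx.le.trans ht)]; exact hloc 0 t (hax 0 le_rfl))
      rwa [Set.uIcc_of_le (hx.le.trans ht)] at this
    have h2 : ContinuousOn (fun y => Real.exp (-∫ s in (0:ℝ)..y, h s)) (Set.Icc 0 t) :=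
      (h1.neg).rexp
    exact (h2.mono (Set.Icc_subset_Icc_left hx.le)).congr fun y _ => hA y
  -- key identity on Ioc
  have hkey : ∀ t, x ≤ t → ∫ y in Set.Ioc x t, h y * A y = A x - A t := by
    intro t ht
    set hbar : ℝ → ℝ := Set.indicator (Set.Icc x t) h with hbardef
    have hbarint : Integrable hbar volume :=
      (hloc x t (hax x hx.le)).integrable_indicator measurableSet_Icc
    have hbar0 : ∀ y, 0 ≤ hbar y := by
      intro y
      rw [hbardef]
      by_cases hy : y ∈ Set.Icc x t
      · rw [Set.indicator_of_mem hy]; exact hh0 y (lt_of_lt_of_le hx hy.1)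
      · rw [Set.indicator_of_notMem hy]
    have hbarM : ∀ y ∈ Set.Icc x t, (∫ s in x..y, hbar s) = ∫ s in x..y, h s := by
      intro y hy
      rw [intervalIntegral.integral_of_le hy.1, intervalIntegral.integral_of_le hy.1]
      apply setIntegral_congr_fun measurableSet_Ioc
      intro s hs
      rw [hbardef]
      exact Set.indicator_of_mem (Set.mem_Icc.mpr ⟨hs.1.le, hs.2.trans hy.2⟩) h
    have hk := key_exp_integral hbar hbarint hbar0 x t ht
    have hL : (∫ y in x..t, hbar y * Real.exp (-∫ s in x..y, hbar s))
        = ∫ y in Set.Ioc x t, h y * Real.exp (-∫ s in x..y, h s) := by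
      rw [intervalIntegral.integral_of_le ht]
      apply setIntegral_congr_fun measurableSet_Ioc
      intro y hy
      have hyI : y ∈ Set.Icc x t := ⟨hy.1.le, hy.2⟩
      show hbar y * Real.exp (-∫ s in x..y, hbar s) = h y * Real.exp (-∫ s in x..y, h s)
      rw [hbarM y hyI, hbardef, Set.indicator_of_mem hyI h]
    rw [hL, hbarM t (Set.right_mem_Icc.mpr ht)] at hk
    calc ∫ y in Set.Ioc x t, h y * A y
        = ∫ y in Set.Ioc x t, A x * (h y * Real.exp (-∫ s in x..y, h s)) := by
          apply setIntegral_congr_fun measurableSet_Ioc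
          intro y hy
          show h y * A y = A x * (h y * Real.exp (-∫ s in x..y, h s))
          rw [hAmul y hy.1.le]
          ring
      _ = A x * ∫ y in Set.Ioc x t, h y * Real.exp (-∫ s in x..y, h s) :=
          integral_const_mul _ _
      _ = A x * (1 - Real.exp (-∫ s in x..t, h s)) := by rw [hk]
      _ = A x - A t := by rw [hAmul t ht]; ring
  -- inverse square facts
  have hrpow : ∀ t : ℝ, 0 < t → t ^ (-2:ℝ) = (t^2)⁻¹ := by
    intro t ht
    rw [show (-2:ℝ) = -((2:ℕ):ℝ) by norm_num, Real.rpow_neg ht.le, Real.rpow_natCast]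
  have hinv_int : ∀ y : ℝ, 0 < y →
      IntegrableOn (fun t : ℝ => (t^2)⁻¹) (Set.Ioi y) volume := by
    intro y hy
    exact (integrableOn_Ioi_rpow_of_lt (by norm_num : (-2:ℝ) < -1) hy).congr_fun
      (fun t ht => hrpow t (hy.trans ht)) measurableSet_Ioi
  have hinv_val : ∀ y : ℝ, 0 < y → ∫ t in Set.Ioi y, (t^2)⁻¹ = y⁻¹ := by
    intro y hy
    have e : ∫ t in Set.Ioi y, (t^2)⁻¹ = ∫ t in Set.Ioi y, t ^ (-2:ℝ) :=
      setIntegral_congr_fun measurableSet_Ioi fun t ht => (hrpow t (hy.trans ht)).symm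
    rw [e, integral_Ioi_rpow_of_lt (by norm_num : (-2:ℝ) < -1) hy,
      show (-2:ℝ) + 1 = -1 by norm_num, Real.rpow_neg_one]
    field_simp
  have hq_lint : ∀ y : ℝ, 0 < y →
      ∫⁻ t in Set.Ioi y, ENNReal.ofReal ((t^2)⁻¹) = ENNReal.ofReal y⁻¹ := by
    intro y hy
    rw [← ofReal_integral_eq_lintegral_ofReal (hinv_int y hy)
      (Filter.Eventually.of_forall fun t => inv_nonneg.mpr (sq_nonneg t)), hinv_val y hy]
  have hq_meas : Measurable (fun t : ℝ => ENNReal.ofReal ((t^2)⁻¹)) :=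
    ENNReal.measurable_ofReal.comp ((measurable_id.pow_const 2).inv)
  -- a.e.-measurability of the density integrand
  have hhA_aem : AEMeasurable (fun y => ENNReal.ofReal (C * (h y * A y)))
      (volume.restrict (Set.Ioi x)) := by
    apply aemeasurable_Ioi_of_forall_Ioc
    intro t ht
    apply ENNReal.measurable_ofReal.comp_aemeasurable
    apply AEMeasurable.const_mul
    exact (((hloc x t (hax x hx.le)).mono_set
        Set.Ioc_subset_Icc_self).1.aemeasurable).mul
      (((hAcont t ht.le).mono Set.Ioc_subset_Icc_self).aemeasurable measurableSet_Ioc)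
  obtain ⟨P, hPmeas, hPeq⟩ := hhA_aem
  have hAaem : AEMeasurable A (volume.restrict (Set.Ioi x)) := by
    apply aemeasurable_Ioi_of_forall_Ioc
    intro t ht
    exact ((hAcont t ht.le).mono Set.Ioc_subset_Icc_self).aemeasurable measurableSet_Ioc
  -- inner integral value
  have hIntIoc : ∀ t, x ≤ t →
      IntegrableOn (fun y => C * (h y * A y)) (Set.Ioc x t) volume := by
    intro t ht
    apply Integrable.const_mul
    have := (hInt x t hx.le ht).mul_continuousOn
      (by rw [Set.uIcc_of_le ht]; exact hAcont t ht)
    exact this.1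
  have hinner : ∀ t, x < t →
      ∫⁻ y in Set.Ioo x t, ENNReal.ofReal (C * (h y * A y))
        = ENNReal.ofReal (C * (A x - A t)) := by
    intro t ht
    rw [Measure.restrict_congr_set Ioo_ae_eq_Ioc,
      ← ofReal_integral_eq_lintegral_ofReal (hIntIoc t ht.le) ?_]
    · congr 1
      rw [integral_const_mul, hkey t ht.le]
    · filter_upwards [ae_restrict_mem measurableSet_Ioc] with y hy
      exact mul_nonneg hC0 (mul_nonneg (hh0 y (hx.trans hy.1)) (hApos y).le)
  -- Tonelli swap setup
  have hf_unc : AEMeasurable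
      (Function.uncurry fun (y t : ℝ) =>
        if y < t then P y * ENNReal.ofReal ((t^2)⁻¹) else 0)
      ((volume.restrict (Set.Ioi x)).prod (volume.restrict (Set.Ioi x))) := by
    apply Measurable.aemeasurable
    apply Measurable.ite (measurableSet_lt measurable_fst measurable_snd)
    · exact (hPmeas.comp measurable_fst).mul (hq_meas.comp measurable_snd)
    · exact measurable_const
  -- main chain
  have step1 : μ {ω | x < X ω} = ∫⁻ y in Set.Ioi x, ENNReal.ofReal (ρ y) := by
    have hs : {ω | x < X ω} = X ⁻¹' (Set.Ioi x) := rfl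
    rw [hs, ← Measure.map_apply hXm measurableSet_Ioi, hmap,
      withDensity_apply _ measurableSet_Ioi]
  have step2 : ∫⁻ y in Set.Ioi x, ENNReal.ofReal (ρ y)
      = ∫⁻ y in Set.Ioi x, ENNReal.ofReal (C * A y / g y) := by
    apply lintegral_congr_ae
    filter_upwards [ae_restrict_of_ae hρA, ae_restrict_mem measurableSet_Ioi] with y h1 h2
    rw [h1 (hax y (hx.trans h2).le)]
  have step3 : ∫⁻ y in Set.Ioi x, ENNReal.ofReal (C * A y / g y)
      = ∫⁻ y in Set.Ioi x, ∫⁻ t in Set.Ioi x,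
          (if y < t then P y * ENNReal.ofReal ((t^2)⁻¹) else 0) := by
    apply lintegral_congr_ae
    filter_upwards [ae_restrict_mem measurableSet_Ioi, hPeq] with y hy hPy
    have hy0 : 0 < y := hx.trans hy
    have e1 : (fun t => if y < t then P y * ENNReal.ofReal ((t^2)⁻¹) else 0)
        = (Set.Ioi y).indicator (fun t => P y * ENNReal.ofReal ((t^2)⁻¹)) := by
      funext t; simp [Set.indicator_apply, Set.mem_Ioi]
    rw [e1, lintegral_indicator measurableSet_Ioi,
      Measure.restrict_restrict measurableSet_Ioi,
      Set.inter_eq_left.mpr (Set.Ioi_subset_Ioi hy.le), ← hPy,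
      lintegral_const_mul' _ _ ENNReal.ofReal_ne_top, hq_lint y hy0,
      ← ENNReal.ofReal_mul (mul_nonneg hC0 (mul_nonneg (hh0 y hy0) (hApos y).le))]
    congr 1
    rw [hhdef]
    field_simp [hy0.ne', (hgp y hy0).ne']
  have step4 : (∫⁻ y in Set.Ioi x, ∫⁻ t in Set.Ioi x,
          (if y < t then P y * ENNReal.ofReal ((t^2)⁻¹) else 0))
      = ∫⁻ t in Set.Ioi x, ∫⁻ y in Set.Ioi x,
          (if y < t then P y * ENNReal.ofReal ((t^2)⁻¹) else 0) :=
    lintegral_lintegral_swap hf_unc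
  have step5 : (∫⁻ t in Set.Ioi x, ∫⁻ y in Set.Ioi x,
          (if y < t then P y * ENNReal.ofReal ((t^2)⁻¹) else 0))
      = ∫⁻ t in Set.Ioi x, ENNReal.ofReal ((t^2)⁻¹ * (C * (A x - A t))) := by
    apply lintegral_congr_ae
    filter_upwards [ae_restrict_mem measurableSet_Ioi] with t ht
    have e1 : (fun y => if y < t then P y * ENNReal.ofReal ((t^2)⁻¹) else 0)
        = (Set.Iio t).indicator (fun y => P y * ENNReal.ofReal ((t^2)⁻¹)) := by
      funext y; simp [Set.indicator_apply, Set.mem_Iio]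
    rw [e1, lintegral_indicator measurableSet_Iio,
      Measure.restrict_restrict measurableSet_Iio, Set.Iio_inter_Ioi,
      lintegral_mul_const' _ _ ENNReal.ofReal_ne_top]
    have ePy : ∫⁻ y in Set.Ioo x t, P y
        = ∫⁻ y in Set.Ioo x t, ENNReal.ofReal (C * (h y * A y)) :=
      lintegral_congr_ae
        ((hPeq.filter_mono (ae_mono (Measure.restrict_mono Set.Ioo_subset_Ioi_self le_rfl))).symm)
    rw [ePy, hinner t ht,
      ← ENNReal.ofReal_mul (mul_nonneg hC0 (sub_nonneg.mpr (hAle t ht.le)))]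
    congr 1
    ring
  have haesm : AEStronglyMeasurable (fun t => (t^2)⁻¹ * (C * (A x - A t)))
      (volume.restrict (Set.Ioi x)) := by
    apply AEMeasurable.aestronglyMeasurable
    exact (((measurable_id.pow_const 2).inv).aemeasurable).mul
      ((aemeasurable_const.sub hAaem).const_mul C)
  have step6 : ∫ t in Set.Ioi x, (t^2)⁻¹ * (C * (A x - A t))
      = (∫⁻ t in Set.Ioi x, ENNReal.ofReal ((t^2)⁻¹ * (C * (A x - A t)))).toReal := by
    apply integral_eq_lintegral_of_nonneg_ae ?_ haesm
    filter_upwards [ae_restrict_mem measurableSet_Ioi] with t ht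
    exact mul_nonneg (inv_nonneg.mpr (sq_nonneg t))
      (mul_nonneg hC0 (sub_nonneg.mpr (hAle t ht.le)))
  have hA2_int : IntegrableOn (fun t => A t * (t^2)⁻¹) (Set.Ioi x) volume := by
    have hsm : AEStronglyMeasurable (fun t => A t * (t^2)⁻¹)
        (volume.restrict (Set.Ioi x)) := by
      apply AEMeasurable.aestronglyMeasurable
      exact hAaem.mul ((measurable_id.pow_const 2).inv.aemeasurable)
    apply Integrable.mono ((hinv_int x hx).const_mul (A x)) hsm
    filter_upwards [ae_restrict_mem measurableSet_Ioi] with t ht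
    simp only [Real.norm_eq_abs]
    rw [abs_of_nonneg (mul_nonneg (hApos t).le (inv_nonneg.mpr (sq_nonneg t))),
      abs_of_nonneg (mul_nonneg (hApos x).le (inv_nonneg.mpr (sq_nonneg t)))]
    exact mul_le_mul_of_nonneg_right (hAle t ht.le) (inv_nonneg.mpr (sq_nonneg t))
  have step7 : ∫ t in Set.Ioi x, (t^2)⁻¹ * (C * (A x - A t))
      = C * (A x / x - ∫ y in Set.Ioi x, A y / y ^ 2) := by
    have e1 : Set.EqOn (fun t => (t^2)⁻¹ * (C * (A x - A t)))
        (fun t => C * A x * (t^2)⁻¹ - C * (A t * (t^2)⁻¹)) (Set.Ioi x) := by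
      intro t _; simp only; ring
    rw [setIntegral_congr_fun measurableSet_Ioi e1,
      integral_sub ((hinv_int x hx).const_mul (C * A x)) (hA2_int.const_mul C),
      integral_const_mul, integral_const_mul, hinv_val x hx]
    have e2 : ∫ t in Set.Ioi x, A t * (t^2)⁻¹ = ∫ y in Set.Ioi x, A y / y ^ 2 :=
      setIntegral_congr_fun measurableSet_Ioi fun t _ => (div_eq_mul_inv _ _).symm
    rw [e2, div_eq_mul_inv]
    ring
  rw [step1, step2, step3, step4, step5, ← step6, step7]
end

section
/- In the density-representation setting, assume additionally that for some c′ ∈ (0,1) and z₀ > 1 one has g(x) ≤ c′ x² for all x > z₀. Then for every x > z₀: P[X > x] ≥ K · A(x)/x, where K := (E|X|/2) · (c′)^{c′}/(1 + c′)^{1+c′}. -/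
open MeasureTheory

/-- **Density-representation setting** (Nourdin–Viens): `X` is a centered integrable random
variable whose law has Lebesgue density `ρ`, positive on `(a, ∞)` (with `−∞ ≤ a < 0`) and
vanishing outside; `g > 0` on `(a, ∞)` with `y ↦ y/g(y)` locally integrable there;
`A(x) = exp(−∫_0^x y/g(y) dy)`; and `ρ(x) = (E|X|/2) A(x)/g(x)` a.e. on `(a, ∞)`. -/
theorem tail_lower_bound_A {Ω : Type*} {mΩ : MeasurableSpace Ω} (μ : Measure Ω)
    [IsProbabilityMeasure μ] (X : Ω → ℝ) (hXm : Measurable X)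
    (hXint : Integrable X μ) (hcen : ∫ ω, X ω ∂μ = 0)
    (ρ g : ℝ → ℝ) (a : EReal) (ha : a < 0)
    (hmap : Measure.map X μ = volume.withDensity fun x => ENNReal.ofReal (ρ x))
    (hρpos : ∀ x : ℝ, a < (x : EReal) → 0 < ρ x)
    (hρzero : ∀ x : ℝ, (x : EReal) ≤ a → ρ x = 0)
    (hgpos : ∀ x : ℝ, a < (x : EReal) → 0 < g x)
    (hloc : ∀ u v : ℝ, a < (u : EReal) → IntegrableOn (fun y => y / g y) (Set.Icc u v) volume)
    (A : ℝ → ℝ) (hA : ∀ x : ℝ, A x = Real.exp (-∫ y in (0 : ℝ)..x, y / g y))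
    (hρA : ∀ᵐ x : ℝ ∂volume, a < (x : EReal) →
      ρ x = (∫ ω, |X ω| ∂μ) / 2 * A x / g x)
    (c' z₀ : ℝ) (hc' : c' ∈ Set.Ioo (0 : ℝ) 1) (hz₀ : 1 < z₀)
    (hgub : ∀ x : ℝ, z₀ < x → g x ≤ c' * x ^ 2) :
    ∀ x : ℝ, z₀ < x →
      (μ {ω | x < X ω}).toReal ≥
        (∫ ω, |X ω| ∂μ) / 2 * (c' ^ c' / (1 + c') ^ (1 + c')) * (A x / x) := by
  obtain ⟨hc0, hc1⟩ := hc'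
  intro x hx
  set M : ℝ := (∫ ω, |X ω| ∂μ) / 2 with hM
  have hM0 : 0 ≤ M := div_nonneg (integral_nonneg fun ω => abs_nonneg _) two_pos.le
  have hx1 : 1 < x := hz₀.trans hx
  have hx0 : 0 < x := lt_trans one_pos hx1
  set s : ℝ := (1 + c') / c' with hs_def
  have hs1 : 1 < s := (one_lt_div hc0).2 (by linarith)
  have hs0 : 0 < s := lt_trans one_pos hs1
  set β : ℝ := s ^ c' with hβ_def
  have hβ1 : 1 < β := (Real.one_lt_rpow_iff_of_pos hs0).2 (Or.inl ⟨hs1, hc0⟩)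
  have hβ0 : 0 < β := lt_trans one_pos hβ1
  set b : ℝ := β * x with hb_def
  have hxb : x < b := by nlinarith
  have hb0 : 0 < b := lt_trans hx0 hxb
  have haR : ∀ y : ℝ, 0 ≤ y → a < (y : EReal) := by
    intro y hy
    refine lt_of_lt_of_le ha ?_
    rw [show ((0 : EReal)) = ((0 : ℝ) : EReal) by norm_cast]
    exact_mod_cast hy
  set h : ℝ → ℝ := fun y => y / g y with hh_def
  have hII : ∀ u v : ℝ, 0 ≤ u → 0 ≤ v → IntervalIntegrable h volume u v := by
    intro u v hu hv
    refine IntegrableOn.intervalIntegrable ?_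
    have := hloc (min u v) (max u v) (haR _ (le_min hu hv))
    simpa [Set.uIcc] using this
  have hgy : ∀ y : ℝ, 0 < y → 0 < g y := fun y hy => hgpos y (haR y hy.le)
  have hh0 : ∀ y : ℝ, 0 < y → 0 ≤ h y := fun y hy => div_nonneg hy.le (hgy y hy).le
  have hhlb : ∀ y : ℝ, y ∈ Set.Icc x b → (c' * y)⁻¹ ≤ h y := by
    intro y hy
    have hy0 : 0 < y := lt_of_lt_of_le hx0 hy.1
    have hgub' : g y ≤ c' * y ^ 2 := hgub y (lt_of_lt_of_le hx hy.1)
    have hg0 : 0 < g y := hgy y hy0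
    rw [hh_def]
    rw [inv_eq_one_div, div_le_div_iff₀ (by positivity) hg0]
    nlinarith
  set U : ℝ → ℝ := fun y => ∫ t in x..y, h t with hU_def
  have hUcont : ContinuousOn U (Set.Icc x b) := by
    have := intervalIntegral.continuousOn_primitive_interval'
      (hII x b hx0.le hb0.le) (Set.left_mem_uIcc (a := x) (b := b))
    simpa [Set.uIcc_of_le hxb.le] using this
  have hUadd : ∀ p q : ℝ, p ∈ Set.Icc x b → q ∈ Set.Icc x b →
      U q - U p = ∫ t in p..q, h t := by
    intro p q hp hq
    have h1 : (0:ℝ) < p := lt_of_lt_of_le hx0 hp.1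
    have h2 : (0:ℝ) < q := lt_of_lt_of_le hx0 hq.1
    simp only [hU_def]
    rw [← intervalIntegral.integral_add_adjacent_intervals (hII x p hx0.le h1.le)
      (hII p q h1.le h2.le)]
    ring
  have hUmono : ∀ p q : ℝ, p ∈ Set.Icc x b → q ∈ Set.Icc x b → p ≤ q → U p ≤ U q := by
    intro p q hp hq hpq
    have := hUadd p q hp hq
    have hnn : 0 ≤ ∫ t in p..q, h t := by
      apply intervalIntegral.integral_nonneg hpq
      intro u hu
      exact hh0 u (lt_of_lt_of_le hx0 (hp.1.trans hu.1))
    linarith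
  have hU0 : U x = 0 := intervalIntegral.integral_same
  have hUnn : ∀ p : ℝ, p ∈ Set.Icc x b → 0 ≤ U p := by
    intro p hp
    have := hUmono x p (Set.left_mem_Icc.2 hxb.le) hp hp.1
    rwa [hU0] at this
  set L : ℝ := U b with hL_def
  have hlogs : 0 < Real.log s := Real.log_pos hs1
  have hL : Real.log s ≤ L := by
    have hmono : ∫ y in x..b, (c' * y)⁻¹ ≤ ∫ y in x..b, h y := by
      apply intervalIntegral.integral_mono_on hxb.le ?_ (hII x b hx0.le hb0.le) hhlb
      apply ContinuousOn.intervalIntegrable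
      apply ContinuousOn.inv₀
      · fun_prop
      · intro y hy
        have hy' : y ∈ Set.Icc x b := by simpa [Set.uIcc_of_le hxb.le] using hy
        have : 0 < y := lt_of_lt_of_le hx0 hy'.1
        positivity
    have hcalc : ∫ y in x..b, (c' * y)⁻¹ = Real.log s := by
      have : ∀ y : ℝ, (c' * y)⁻¹ = c'⁻¹ * y⁻¹ := fun y => by rw [mul_inv]
      simp_rw [this]
      have h0 : (0:ℝ) ∉ Set.uIcc x b := by
        simp only [Set.uIcc_of_le hxb.le, Set.mem_Icc, not_and_or]
        left; exact not_le.2 hx0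
      rw [intervalIntegral.integral_const_mul, integral_inv h0]
      have : b / x = β := by field_simp; rw [hb_def]; ring
      rw [this, hβ_def, Real.log_rpow hs0]
      field_simp
    calc Real.log s = ∫ y in x..b, (c' * y)⁻¹ := hcalc.symm
    _ ≤ ∫ y in x..b, h y := hmono
    _ = L := by rw [hL_def, hU_def]
  have hL0 : 0 < L := lt_of_lt_of_le hlogs hL
  have hUstrict : ∀ p : ℝ, p ∈ Set.Icc x b → p < b → U p < U b := by
    intro p hp hpb
    have hp0 : 0 < p := lt_of_lt_of_le hx0 hp.1
    have hpos : 0 < ∫ t in p..b, h t := by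
      apply intervalIntegral.intervalIntegral_pos_of_pos_on (hII p b hp0.le hb0.le) ?_ hpb
      intro u hu
      have hu0 : 0 < u := hp0.trans hu.1
      have := hhlb u ⟨hp.1.trans hu.1.le, hu.2.le⟩
      have : 0 < (c' * u)⁻¹ := by positivity
      linarith [hhlb u ⟨hp.1.trans hu.1.le, hu.2.le⟩]
    have := hUadd p b hp (Set.right_mem_Icc.2 hxb.le)
    linarith
  set φ : ℝ → ℝ := fun y => h y * Real.exp (-U y) with hφ_def
  have hφnn : ∀ y : ℝ, 0 < y → 0 ≤ φ y := fun y hy =>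
    mul_nonneg (hh0 y hy) (Real.exp_pos _).le
  have hφmeas : AEStronglyMeasurable φ (volume.restrict (Set.Icc x b)) := by
    apply AEStronglyMeasurable.mul
    · exact (hloc x b (haR x hx0.le)).aestronglyMeasurable
    · exact (Real.continuous_exp.comp_continuousOn hUcont.neg).aestronglyMeasurable
        measurableSet_Icc
  have hφint : IntegrableOn φ (Set.Icc x b) volume := by
    apply Integrable.mono (hloc x b (haR x hx0.le)) hφmeas
    filter_upwards [ae_restrict_mem measurableSet_Icc] with y hy
    rw [hφ_def, hh_def]
    rw [norm_mul]
    have h1 : ‖Real.exp (-U y)‖ ≤ 1 := by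
      rw [Real.norm_eq_abs, abs_of_pos (Real.exp_pos _), Real.exp_le_one_iff]
      simpa using hUnn y hy
    calc ‖y / g y‖ * ‖Real.exp (-U y)‖ ≤ ‖y / g y‖ * 1 :=
      mul_le_mul_of_nonneg_left h1 (norm_nonneg _)
    _ = ‖y / g y‖ := mul_one _
  have hφII : ∀ p q : ℝ, p ∈ Set.Icc x b → q ∈ Set.Icc x b →
      IntervalIntegrable φ volume p q := by
    intro p q hp hq
    apply IntegrableOn.intervalIntegrable
    exact hφint.mono_set (Set.uIcc_subset_Icc hp hq)
  -- main lower bound on the interval integral of φ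
  have hImain : 1 - Real.exp (-L) ≤ ∫ y in x..b, φ y := by
    set I : ℝ := ∫ y in x..b, φ y with hI_def
    have key : ∀ n : ℕ, 1 ≤ n → Real.exp (-(L / n)) * (1 - Real.exp (-L)) ≤ I := by
      intro n hn
      have hn0 : (0:ℝ) < n := by exact_mod_cast hn
      set c : ℝ := L / n with hc_def
      have hc0' : 0 < c := div_pos hL0 hn0
      have hnc : (n:ℝ) * c = L := by rw [hc_def]; field_simp
      set S : ℕ → Set ℝ := fun k => Set.Icc x b ∩ U ⁻¹' {(k:ℝ) * c} with hS_def
      have hSmem : ∀ k : ℕ, k ≤ n → (S k).Nonempty := by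
        intro k hk
        have h1 : (k:ℝ) * c ∈ Set.Icc (U x) (U b) := by
          rw [hU0]
          have hkn : (k:ℝ) ≤ (n:ℝ) := by exact_mod_cast hk
          constructor
          · positivity
          · show (k:ℝ) * c ≤ L
            rw [← hnc]
            exact mul_le_mul_of_nonneg_right hkn hc0'.le
        obtain ⟨z, hz, hUz⟩ := intermediate_value_Icc hxb.le hUcont h1
        exact ⟨z, hz, hUz⟩
      have hSclosed : ∀ k : ℕ, IsClosed (S k) :=
        fun k => hUcont.preimage_isClosed_of_isClosed isClosed_Icc isClosed_singleton
      have hSbdd : ∀ k : ℕ, BddBelow (S k) := fun k =>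
        (show BddBelow (Set.Icc x b) from bddBelow_Icc).mono Set.inter_subset_left
      set y : ℕ → ℝ := fun k => sInf (S k) with hy_def
      have hymem : ∀ k : ℕ, k ≤ n → y k ∈ S k := fun k hk =>
        (hSclosed k).csInf_mem (hSmem k hk) (hSbdd k)
      have hyIcc : ∀ k : ℕ, k ≤ n → y k ∈ Set.Icc x b := fun k hk => (hymem k hk).1
      have hyU : ∀ k : ℕ, k ≤ n → U (y k) = (k:ℝ) * c := fun k hk => (hymem k hk).2
      have hy0 : y 0 = x := by
        apply le_antisymm
        · apply csInf_le (hSbdd 0)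
          exact ⟨Set.left_mem_Icc.2 hxb.le, by simp [hU0]⟩
        · exact (hyIcc 0 (Nat.zero_le n)).1
      have hyn : y n = b := by
        by_contra hne
        have hlt : y n < b := lt_of_le_of_ne (hyIcc n le_rfl).2 hne
        have h2 := hUstrict (y n) (hyIcc n le_rfl) hlt
        rw [hyU n le_rfl] at h2
        rw [hnc] at h2
        exact lt_irrefl _ h2
      have hymono : ∀ k : ℕ, k < n → y k ≤ y (k+1) := by
        intro k hk
        by_contra hlt
        push_neg at hlt
        have h1 := hUmono _ _ (hyIcc (k+1) hk) (hyIcc k hk.le) hlt.le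
        rw [hyU (k+1) hk, hyU k hk.le] at h1
        push_cast at h1
        nlinarith
      have hsum : ∑ k ∈ Finset.range n, ∫ t in y k..y (k+1), φ t = I := by
        rw [intervalIntegral.sum_integral_adjacent_intervals
          (fun k hk => hφII _ _ (hyIcc k hk.le) (hyIcc (k+1) hk))]
        rw [hy0, hyn]
      have hpiece : ∀ k : ℕ, k < n →
          Real.exp (-(((k:ℝ)+1) * c)) * c ≤ ∫ t in y k..y (k+1), φ t := by
        intro k hk
        have hk1 : k + 1 ≤ n := hk
        have hmem1 := hyIcc k hk.le
        have hmem2 := hyIcc (k+1) hk1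
        have hbound : ∀ t ∈ Set.Icc (y k) (y (k+1)),
            Real.exp (-(((k:ℝ)+1) * c)) * h t ≤ φ t := by
          intro t ht
          have htIcc : t ∈ Set.Icc x b := ⟨hmem1.1.trans ht.1, ht.2.trans hmem2.2⟩
          have hUt : U t ≤ ((k:ℝ)+1) * c := by
            have h3 := hUmono t (y (k+1)) htIcc hmem2 ht.2
            rw [hyU (k+1) hk1] at h3
            push_cast at h3
            linarith
          have ht0 : 0 < t := lt_of_lt_of_le hx0 htIcc.1
          have hexp : Real.exp (-(((k:ℝ)+1) * c)) ≤ Real.exp (-U t) :=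
            Real.exp_le_exp.2 (by linarith)
          calc Real.exp (-(((k:ℝ)+1)*c)) * h t ≤ Real.exp (-U t) * h t :=
            mul_le_mul_of_nonneg_right hexp (hh0 t ht0)
          _ = φ t := by rw [hφ_def]; ring
        have hyk0 : (0:ℝ) < y k := lt_of_lt_of_le hx0 hmem1.1
        have hyk10 : (0:ℝ) < y (k+1) := lt_of_lt_of_le hx0 hmem2.1
        have hint1 : IntervalIntegrable (fun t => Real.exp (-(((k:ℝ)+1)*c)) * h t)
            volume (y k) (y (k+1)) := (hII _ _ hyk0.le hyk10.le).const_mul _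
        have h4 := intervalIntegral.integral_mono_on (hymono k hk) hint1
          (hφII _ _ hmem1 hmem2) hbound
        rw [intervalIntegral.integral_const_mul] at h4
        have harea : ∫ t in y k..y (k+1), h t = c := by
          rw [← hUadd _ _ hmem1 hmem2, hyU _ hk1, hyU _ hk.le]
          push_cast; ring
        rw [harea] at h4
        exact h4
      have hterm : ∀ k : ℕ,
          Real.exp (-c) * (Real.exp (-((k:ℝ)*c)) - Real.exp (-(((k:ℝ)+1) * c)))
            ≤ Real.exp (-(((k:ℝ)+1)*c)) * c := by
        intro k
        have he : Real.exp (-((k:ℝ)*c)) = Real.exp (-(((k:ℝ)+1)*c)) * Real.exp c := by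
          rw [← Real.exp_add]; ring_nf
        have h1c : 1 - Real.exp (-c) ≤ c := by
          have := Real.add_one_le_exp (-c); linarith
        have hme : Real.exp (-c) * Real.exp c = 1 := by
          rw [← Real.exp_add]; simp
        have hrw : Real.exp (-c) * (Real.exp (-((k:ℝ)*c)) - Real.exp (-(((k:ℝ)+1) * c)))
            = Real.exp (-(((k:ℝ)+1)*c)) * (1 - Real.exp (-c)) := by
          rw [he]
          have hr2 : Real.exp (-c) *
              (Real.exp (-(((k:ℝ)+1)*c)) * Real.exp c - Real.exp (-(((k:ℝ)+1) * c)))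
              = Real.exp (-(((k:ℝ)+1)*c)) * (Real.exp (-c) * Real.exp c - Real.exp (-c)) := by
            ring
          rw [hr2, hme]
        rw [hrw]
        exact mul_le_mul_of_nonneg_left h1c (Real.exp_pos _).le
      have htel : ∑ k ∈ Finset.range n,
          (Real.exp (-((k:ℝ)*c)) - Real.exp (-(((k:ℝ)+1) * c))) = 1 - Real.exp (-L) := by
        have := Finset.sum_range_sub' (fun k : ℕ => Real.exp (-((k:ℝ)*c))) n
        simp only [Nat.cast_add, Nat.cast_one] at this
        rw [this]
        norm_num
        rw [hnc]
      calc Real.exp (-c) * (1 - Real.exp (-L))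
          = ∑ k ∈ Finset.range n,
              Real.exp (-c) * (Real.exp (-((k:ℝ)*c)) - Real.exp (-(((k:ℝ)+1) * c))) := by
            rw [← Finset.mul_sum, htel]
        _ ≤ ∑ k ∈ Finset.range n, Real.exp (-(((k:ℝ)+1)*c)) * c :=
            Finset.sum_le_sum fun k _ => hterm k
        _ ≤ ∑ k ∈ Finset.range n, ∫ t in y k..y (k+1), φ t :=
            Finset.sum_le_sum fun k hk => hpiece k (Finset.mem_range.1 hk)
        _ = I := hsum
    have hlim : Filter.Tendsto (fun n : ℕ => Real.exp (-(L / n)) * (1 - Real.exp (-L)))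
        Filter.atTop (nhds (1 - Real.exp (-L))) := by
      have h1 : Filter.Tendsto (fun n : ℕ => L / n) Filter.atTop (nhds 0) :=
        tendsto_const_div_atTop_nhds_zero_nat L
      have h1n : Filter.Tendsto (fun n : ℕ => -(L / n)) Filter.atTop (nhds 0) := by
        simpa using h1.neg
      have h2 := (Real.continuous_exp.tendsto 0).comp h1n
      simp only [neg_zero, Real.exp_zero] at h2
      have h3 := h2.mul_const (1 - Real.exp (-L))
      simpa [Function.comp] using h3
    exact le_of_tendsto hlim (Filter.eventually_atTop.2 ⟨1, fun n hn => key n hn⟩)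
  -- STEP: from exponential bound to 1/(1+c')
  have h1c'0 : (0:ℝ) < 1 + c' := by linarith
  have hIfin : (1 + c')⁻¹ ≤ ∫ y in x..b, φ y := by
    have h1 : Real.exp (-L) ≤ s⁻¹ := by
      rw [← Real.exp_log hs0, ← Real.exp_neg]
      exact Real.exp_le_exp.2 (neg_le_neg hL)
    have h2 : 1 - s⁻¹ = (1 + c')⁻¹ := by
      rw [hs_def]
      rw [inv_div]
      field_simp
      ring
    linarith [hImain]
  have hAx0 : 0 < A x := by rw [hA x]; exact Real.exp_pos _
  have hIoc : ∀ y ∈ Set.Ioc x b, M * A y / g y = (M * A x) * (φ y * y⁻¹) := by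
    intro y hy
    have hy0 : 0 < y := hx0.trans hy.1
    have hgy0 : 0 < g y := hgy y hy0
    have hAy : A y = A x * Real.exp (-U y) := by
      rw [hA y, hA x]
      have hsplit : ∫ t in (0:ℝ)..y, h t = (∫ t in (0:ℝ)..x, h t) + U y :=
        (intervalIntegral.integral_add_adjacent_intervals (hII 0 x le_rfl hx0.le)
          (hII x y hx0.le hy0.le)).symm
      rw [hU_def] at hsplit ⊢
      rw [hsplit, neg_add, Real.exp_add]
    rw [hAy, hφ_def, hh_def]
    field_simp
  have hφIoc : IntegrableOn φ (Set.Ioc x b) volume := hφint.mono_set Set.Ioc_subset_Icc_self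
  have hintφinv : IntegrableOn (fun y => φ y * y⁻¹) (Set.Ioc x b) volume := by
    apply Integrable.mono' (g := fun y => x⁻¹ * φ y) (hφIoc.const_mul x⁻¹)
    · exact (hφIoc.aestronglyMeasurable.mul measurable_inv.aestronglyMeasurable)
    · filter_upwards [ae_restrict_mem measurableSet_Ioc] with y hy
      have hy0 : 0 < y := hx0.trans hy.1
      have hφy := hφnn y hy0
      rw [Real.norm_eq_abs, abs_of_nonneg (by positivity)]
      have hinv : y⁻¹ ≤ x⁻¹ := by
        apply inv_anti₀ hx0 hy.1.le
      calc φ y * y⁻¹ ≤ φ y * x⁻¹ := mul_le_mul_of_nonneg_left hinv hφy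
      _ = x⁻¹ * φ y := mul_comm _ _
  have hintχ : IntegrableOn (fun y => (M * A x) * (φ y * y⁻¹)) (Set.Ioc x b) volume :=
    hintφinv.const_mul _
  have hintψ : IntegrableOn (fun y => M * A y / g y) (Set.Ioc x b) volume := by
    apply Integrable.congr hintχ
    filter_upwards [ae_restrict_mem measurableSet_Ioc] with y hy
    exact (hIoc y hy).symm
  have hψnn : 0 ≤ᵐ[volume.restrict (Set.Ioc x b)] fun y => M * A y / g y := by
    filter_upwards [ae_restrict_mem measurableSet_Ioc] with y hy
    have hy0 : 0 < y := hx0.trans hy.1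
    have hgy0 := hgy y hy0
    have hAy0 : 0 < A y := by rw [hA y]; exact Real.exp_pos _
    positivity
  have hIφeq : ∫ y in Set.Ioc x b, φ y = ∫ y in x..b, φ y :=
    (intervalIntegral.integral_of_le hxb.le).symm
  have hrc : M * (c' ^ c' / (1 + c') ^ (1 + c')) * (A x / x)
      ≤ ∫ y in Set.Ioc x b, M * A y / g y := by
    have hcp : (0:ℝ) < c' ^ (c' : ℝ) := Real.rpow_pos_of_pos hc0 _
    have h1cp : (0:ℝ) < (1 + c') ^ (c' : ℝ) := Real.rpow_pos_of_pos h1c'0 _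
    have hb1 : (1 + c') ^ ((1:ℝ) + c') = (1 + c') * (1 + c') ^ (c' : ℝ) := by
      rw [Real.rpow_add h1c'0 1 c', Real.rpow_one]
    have hβeq : β = (1 + c') ^ (c' : ℝ) / c' ^ (c' : ℝ) := by
      rw [hβ_def, hs_def, Real.div_rpow (by linarith) hc0.le]
    have e0 : M * (c' ^ c' / (1 + c') ^ (1 + c')) * (A x / x)
        = (M * A x) * (b⁻¹ * (1 + c')⁻¹) := by
      rw [hb1, hb_def, hβeq]
      field_simp
    have e1 : ∫ y in Set.Ioc x b, M * A y / g y
        = ∫ y in Set.Ioc x b, (M * A x) * (φ y * y⁻¹) :=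
      setIntegral_congr_fun measurableSet_Ioc hIoc
    have e2 : ∫ y in Set.Ioc x b, (M * A x) * (φ y * y⁻¹)
        = (M * A x) * ∫ y in Set.Ioc x b, φ y * y⁻¹ := integral_const_mul _ _
    have e3 : b⁻¹ * ∫ y in Set.Ioc x b, φ y ≤ ∫ y in Set.Ioc x b, φ y * y⁻¹ := by
      rw [← integral_const_mul]
      apply setIntegral_mono_on (hφIoc.const_mul b⁻¹) hintφinv measurableSet_Ioc
      intro y hy
      have hy0 : 0 < y := hx0.trans hy.1
      have hinv : b⁻¹ ≤ y⁻¹ := inv_anti₀ hy0 hy.2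
      calc b⁻¹ * φ y = φ y * b⁻¹ := mul_comm _ _
      _ ≤ φ y * y⁻¹ := mul_le_mul_of_nonneg_left hinv (hφnn y hy0)
    have e4 : (1 + c')⁻¹ ≤ ∫ y in Set.Ioc x b, φ y := by rw [hIφeq]; exact hIfin
    have hMAx : (0:ℝ) ≤ M * A x := by positivity
    calc M * (c' ^ c' / (1 + c') ^ (1 + c')) * (A x / x)
        = (M * A x) * (b⁻¹ * (1 + c')⁻¹) := e0
      _ ≤ (M * A x) * (b⁻¹ * ∫ y in Set.Ioc x b, φ y) := by
          apply mul_le_mul_of_nonneg_left _ hMAx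
          exact mul_le_mul_of_nonneg_left e4 (by positivity)
      _ ≤ (M * A x) * ∫ y in Set.Ioc x b, φ y * y⁻¹ :=
          mul_le_mul_of_nonneg_left e3 hMAx
      _ = ∫ y in Set.Ioc x b, (M * A x) * (φ y * y⁻¹) := e2.symm
      _ = ∫ y in Set.Ioc x b, M * A y / g y := e1.symm
  -- ENNReal chain
  have hmeasNe : μ {ω | x < X ω} ≠ ⊤ := measure_ne_top μ _
  rw [ge_iff_le, ← ENNReal.ofReal_le_iff_le_toReal hmeasNe]
  have h1 : μ {ω | x < X ω} = ∫⁻ y in Set.Ioi x, ENNReal.ofReal (ρ y) := by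
    have hset : {ω | x < X ω} = X ⁻¹' Set.Ioi x := rfl
    rw [hset, ← Measure.map_apply hXm measurableSet_Ioi, hmap,
      withDensity_apply _ measurableSet_Ioi]
  rw [h1]
  calc ENNReal.ofReal (M * (c' ^ c' / (1 + c') ^ (1 + c')) * (A x / x))
      ≤ ENNReal.ofReal (∫ y in Set.Ioc x b, M * A y / g y) := ENNReal.ofReal_le_ofReal hrc
    _ = ∫⁻ y in Set.Ioc x b, ENNReal.ofReal (M * A y / g y) :=
        ofReal_integral_eq_lintegral_ofReal hintψ hψnn
    _ = ∫⁻ y in Set.Ioc x b, ENNReal.ofReal (ρ y) := by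
        apply lintegral_congr_ae
        filter_upwards [ae_restrict_mem measurableSet_Ioc, ae_restrict_of_ae hρA] with y hy hρy
        rw [hρy (haR y (hx0.trans hy.1).le)]
    _ ≤ ∫⁻ y in Set.Ioi x, ENNReal.ofReal (ρ y) := lintegral_mono_set Set.Ioc_subset_Ioi_self
end

section
/- In the density-representation setting, assume that for some c′ ∈ (0,1) and z₀ > 1 one has g(x) ≤ c′ x² for all x > z₀, and that moreover g(x) ≥ 1 for all x ∈ (a, ∞). Then for every x > z₀: P[X > x] ≥ K · x^{−1} e^{−x²/2}, where K := (E|X|/2) · (c′)^{c′}/(1 + c′)^{1+c′}. -/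
open MeasureTheory Set Filter

lemma G_integrableOn {h : ℝ → ℝ} {x b : ℝ} (hxb : x ≤ b)
    (hint : IntegrableOn h (Set.Icc x b) volume)
    (hpos : ∀ t ∈ Set.Icc x b, 0 ≤ h t) :
    IntegrableOn (fun t => h t * Real.exp (-∫ s in x..t, h s)) (Set.Icc x b) volume := by
  have hxmem : x ∈ Icc x b := ⟨le_rfl, hxb⟩
  set H : ℝ → ℝ := fun t => ∫ s in x..t, h s with hHdef
  have hsub : ∀ u v, u ∈ Icc x b → v ∈ Icc x b → IntervalIntegrable h volume u v :=
    fun u v hu hv => (hint.mono_set (uIcc_subset_Icc hu hv)).intervalIntegrable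
  have hHmono : ∀ u v, u ∈ Icc x b → v ∈ Icc x b → u ≤ v → H u ≤ H v := by
    intro u v hu hv huv
    have h1 : H v - H u = ∫ s in u..v, h s :=
      intervalIntegral.integral_interval_sub_left (hsub x v hxmem hv) (hsub x u hxmem hu)
    have h2 : 0 ≤ ∫ s in u..v, h s :=
      intervalIntegral.integral_nonneg huv fun t ht =>
        hpos t ⟨hu.1.trans ht.1, ht.2.trans hv.2⟩
    linarith
  have hHx : H x = 0 := intervalIntegral.integral_same
  have hHnn : ∀ t ∈ Icc x b, 0 ≤ H t := fun t ht => hHx ▸ hHmono x t hxmem ht ht.1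
  have hHcont : ContinuousOn H (Icc x b) := by
    have := intervalIntegral.continuousOn_primitive_interval
      (f := h) (μ := volume) (a := x) (b := b) (by rwa [Set.uIcc_of_le hxb])
    rwa [Set.uIcc_of_le hxb] at this
  have hmeas : AEStronglyMeasurable (fun t => h t * Real.exp (-H t))
      (volume.restrict (Icc x b)) :=
    hint.aestronglyMeasurable.mul
      ((Real.continuous_exp.comp_continuousOn hHcont.neg).aestronglyMeasurable
        measurableSet_Icc)
  refine hint.abs.mono' hmeas ?_
  filter_upwards [ae_restrict_mem measurableSet_Icc] with t ht
  have h1 : Real.exp (-H t) ≤ 1 := by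
    rw [Real.exp_le_one_iff]
    simpa using hHnn t ht
  calc ‖h t * Real.exp (-H t)‖ = |h t| * Real.exp (-H t) := by
        simp [abs_mul, abs_of_pos (Real.exp_pos _)]
    _ ≤ |h t| * 1 := mul_le_mul_of_nonneg_left h1 (abs_nonneg _)
    _ = |h t| := mul_one _

lemma key_exp_integral_s15 {h : ℝ → ℝ} {x b : ℝ} (hxb : x ≤ b)
    (hint : IntegrableOn h (Set.Icc x b) volume)
    (hpos : ∀ t ∈ Set.Icc x b, 0 ≤ h t) :
    1 - Real.exp (-∫ t in x..b, h t) ≤ ∫ t in x..b, h t * Real.exp (-∫ s in x..t, h s) := by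
  have hxmem : x ∈ Icc x b := ⟨le_rfl, hxb⟩
  have hbmem : b ∈ Icc x b := ⟨hxb, le_rfl⟩
  set H : ℝ → ℝ := fun t => ∫ s in x..t, h s with hHdef
  have hsub : ∀ u v, u ∈ Icc x b → v ∈ Icc x b → IntervalIntegrable h volume u v :=
    fun u v hu hv => (hint.mono_set (uIcc_subset_Icc hu hv)).intervalIntegrable
  have hHdiff : ∀ u v, u ∈ Icc x b → v ∈ Icc x b → H v - H u = ∫ s in u..v, h s :=
    fun u v hu hv => intervalIntegral.integral_interval_sub_left (hsub x v hxmem hv)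
      (hsub x u hxmem hu)
  have hHmono : ∀ u v, u ∈ Icc x b → v ∈ Icc x b → u ≤ v → H u ≤ H v := by
    intro u v hu hv huv
    have h1 := hHdiff u v hu hv
    have h2 : 0 ≤ ∫ s in u..v, h s :=
      intervalIntegral.integral_nonneg huv fun t ht =>
        hpos t ⟨hu.1.trans ht.1, ht.2.trans hv.2⟩
    linarith
  have hHx : H x = 0 := intervalIntegral.integral_same
  have hHnn : ∀ t ∈ Icc x b, 0 ≤ H t := fun t ht => hHx ▸ hHmono x t hxmem ht ht.1
  have hHcont : ContinuousOn H (Icc x b) := by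
    have := intervalIntegral.continuousOn_primitive_interval
      (f := h) (μ := volume) (a := x) (b := b) (by rwa [Set.uIcc_of_le hxb])
    rwa [Set.uIcc_of_le hxb] at this
  set G : ℝ → ℝ := fun t => h t * Real.exp (-H t) with hGdef
  have hGnn : ∀ t ∈ Icc x b, 0 ≤ G t := fun t ht =>
    mul_nonneg (hpos t ht) (Real.exp_pos _).le
  have hGint : IntegrableOn G (Icc x b) volume := by
    have hmeas : AEStronglyMeasurable G (volume.restrict (Icc x b)) :=
      hint.aestronglyMeasurable.mul
        ((Real.continuous_exp.comp_continuousOn hHcont.neg).aestronglyMeasurable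
          measurableSet_Icc)
    refine hint.abs.mono' hmeas ?_
    filter_upwards [ae_restrict_mem measurableSet_Icc] with t ht
    have h1 : Real.exp (-H t) ≤ 1 := by
      rw [Real.exp_le_one_iff]
      simpa using hHnn t ht
    calc ‖G t‖ = |h t| * Real.exp (-H t) := by
          rw [hGdef]; simp [abs_mul, abs_of_pos (Real.exp_pos _)]
      _ ≤ |h t| * 1 := by
          exact mul_le_mul_of_nonneg_left h1 (abs_nonneg _)
      _ = |h t| := mul_one _
  have hGsub : ∀ u v, u ∈ Icc x b → v ∈ Icc x b → IntervalIntegrable G volume u v :=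
    fun u v hu hv => (hGint.mono_set (uIcc_subset_Icc hu hv)).intervalIntegrable
  set S := H b with hSdef
  have hSnn : 0 ≤ S := hHnn b hbmem
  have hgoal : (∫ t in x..b, h t) = S := rfl
  have hgoalG : (∫ t in x..b, h t * Real.exp (-∫ s in x..t, h s)) = ∫ t in x..b, G t := rfl
  rw [hgoal, hgoalG]
  rcases le_or_gt S 0 with hS | hS
  · have h1 : 1 ≤ Real.exp (-S) := by
      rw [Real.one_le_exp_iff]; linarith
    have h2 : 0 ≤ ∫ t in x..b, G t :=
      intervalIntegral.integral_nonneg hxb hGnn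
    linarith
  -- main case
  have key : ∀ n : ℕ, 0 < n →
      Real.exp (-(S / n)) * (1 - Real.exp (-S)) ≤ ∫ t in x..b, G t := by
    intro n hn
    have hn' : (0:ℝ) < n := Nat.cast_pos.2 hn
    have hchoice : ∀ i : ℕ, ∃ t ∈ Set.Icc x b, H t = (min i n : ℕ) * S / n := by
      intro i
      have hle : ((min i n : ℕ) : ℝ) ≤ (n : ℝ) := Nat.cast_le.2 (min_le_right i n)
      have h1 : ((min i n : ℕ) : ℝ) * S / n ∈ Set.Icc (H x) (H b) := by
        rw [hHx]
        constructor
        · positivity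
        · rw [← hSdef, div_le_iff₀ hn']
          nlinarith
      have := intermediate_value_Icc hxb hHcont h1
      obtain ⟨t, ht, hts⟩ := this
      exact ⟨t, ht, hts⟩
    choose T Tmem TH using hchoice
    have THi : ∀ i : ℕ, i ≤ n → H (T i) = i * S / n := by
      intro i hi
      rw [TH i, min_eq_left hi]
    have Tadj : ∀ i : ℕ, i < n → T i ≤ T (i + 1) := by
      intro i hi
      by_contra hlt
      push_neg at hlt
      have h1 := hHmono _ _ (Tmem (i+1)) (Tmem i) hlt.le
      rw [THi i hi.le, THi (i+1) hi] at h1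
      have : ((i:ℝ)+1) * S / n ≤ i * S / n := by push_cast at h1 ⊢; linarith
      rw [div_le_div_iff_of_pos_right hn'] at this
      nlinarith
    have T0n : T 0 ≤ T n := by
      by_contra hlt
      push_neg at hlt
      have h1 := hHmono _ _ (Tmem n) (Tmem 0) hlt.le
      rw [THi 0 (Nat.zero_le n), THi n le_rfl] at h1
      push_cast at h1
      rw [div_le_div_iff_of_pos_right hn'] at h1
      nlinarith
    have hpieceInt : ∀ i, i < n → IntervalIntegrable G volume (T i) (T (i+1)) :=
      fun i _ => hGsub _ _ (Tmem i) (Tmem (i+1))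
    have htel := intervalIntegral.sum_integral_adjacent_intervals hpieceInt
    have hpiece : ∀ i : ℕ, i < n →
        Real.exp (-(((i:ℝ)+1) * S / n)) * (S / n) ≤ ∫ t in (T i)..(T (i+1)), G t := by
      intro i hi
      have hmono : ∀ t ∈ Icc (T i) (T (i+1)),
          h t * Real.exp (-(((i:ℝ)+1) * S / n)) ≤ G t := by
        intro t ht
        have htmem : t ∈ Icc x b := ⟨(Tmem i).1.trans ht.1, ht.2.trans (Tmem (i+1)).2⟩
        have hHt : H t ≤ ((i:ℝ)+1) * S / n := by
          have h1 := hHmono t (T (i+1)) htmem (Tmem (i+1)) ht.2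
          rw [THi (i+1) hi] at h1
          push_cast at h1
          linarith
        exact mul_le_mul_of_nonneg_left (Real.exp_le_exp.2 (neg_le_neg hHt)) (hpos t htmem)
      have hlhsInt : IntervalIntegrable
          (fun t => h t * Real.exp (-(((i:ℝ)+1) * S / n))) volume (T i) (T (i+1)) :=
        (hsub _ _ (Tmem i) (Tmem (i+1))).mul_const _
      have h2 := intervalIntegral.integral_mono_on (Tadj i hi) hlhsInt (hpieceInt i hi) hmono
      rw [intervalIntegral.integral_mul_const] at h2
      have h3 : (∫ t in (T i)..(T (i+1)), h t) = S / n := by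
        have h4 := hHdiff (T i) (T (i+1)) (Tmem i) (Tmem (i+1))
        rw [THi i hi.le, THi (i+1) hi] at h4
        push_cast at h4
        field_simp at h4 ⊢
        linarith
      rw [h3] at h2
      linarith [h2]
    -- combine
    have hsum : ∑ i ∈ Finset.range n, Real.exp (-(((i:ℝ)+1) * S / n)) * (S / n) ≤
        ∫ t in (T 0)..(T n), G t := by
      rw [← htel]
      exact Finset.sum_le_sum fun i hi => hpiece i (Finset.mem_range.1 hi)
    have hextend : (∫ t in (T 0)..(T n), G t) ≤ ∫ t in x..b, G t := by
      have e1 : (∫ t in x..b, G t) =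
          (∫ t in x..(T 0), G t) + (∫ t in (T 0)..(T n), G t) + (∫ t in (T n)..b, G t) := by
        rw [intervalIntegral.integral_add_adjacent_intervals
            (hGsub _ _ hxmem (Tmem 0)) (hGsub _ _ (Tmem 0) (Tmem n)),
          intervalIntegral.integral_add_adjacent_intervals
            (hGsub _ _ hxmem (Tmem n)) (hGsub _ _ (Tmem n) hbmem)]
      have e2 : 0 ≤ ∫ t in x..(T 0), G t :=
        intervalIntegral.integral_nonneg (Tmem 0).1
          (fun t ht => hGnn t ⟨ht.1, ht.2.trans (Tmem 0).2⟩)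
      have e3 : 0 ≤ ∫ t in (T n)..b, G t :=
        intervalIntegral.integral_nonneg (Tmem n).2
          (fun t ht => hGnn t ⟨(Tmem n).1.trans ht.1, ht.2⟩)
      linarith
    -- geometric sum lower bound
    set r := Real.exp (-(S / n)) with hrdef
    have hr0 : 0 < r := Real.exp_pos _
    have hr1 : r < 1 := by
      rw [hrdef, Real.exp_lt_one_iff]
      have : 0 < S / n := div_pos hS hn'
      linarith
    have hrn : r ^ n = Real.exp (-S) := by
      rw [hrdef, ← Real.exp_nat_mul]
      congr 1
      field_simp
    have hterm : ∀ i : ℕ, Real.exp (-(((i:ℝ)+1) * S / n)) = r ^ (i + 1) := by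
      intro i
      rw [hrdef, ← Real.exp_nat_mul]
      congr 1
      push_cast
      ring
    have hsum2 : ∑ i ∈ Finset.range n, Real.exp (-(((i:ℝ)+1) * S / n)) * (S / n)
        = (S / n) * (r * ((r ^ n - 1) / (r - 1))) := by
      rw [← Finset.sum_mul]
      rw [Finset.sum_congr rfl fun i _ => hterm i]
      have : ∑ i ∈ Finset.range n, r ^ (i + 1) = r * ∑ i ∈ Finset.range n, r ^ i := by
        rw [Finset.mul_sum]
        exact Finset.sum_congr rfl fun i _ => by ring
      rw [this, geom_sum_eq (ne_of_lt hr1)]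
      ring
    have hone_sub : 1 - r ≤ S / n := by
      have := Real.add_one_le_exp (-(S / n))
      linarith
    have hfinal : r * (1 - Real.exp (-S)) ≤
        (S / n) * (r * ((r ^ n - 1) / (r - 1))) := by
      rw [← hrn]
      have h1r : 0 < 1 - r := by linarith
      have hrn1 : r ^ n ≤ 1 := pow_le_one₀ hr0.le hr1.le
      have heq : (r ^ n - 1) / (r - 1) = (1 - r ^ n) / (1 - r) := by
        rw [← neg_div_neg_eq]
        ring_nf
      rw [heq]
      have hpos2 : 0 ≤ r * ((1 - r ^ n) / (1 - r)) :=
        mul_nonneg hr0.le (div_nonneg (by linarith) h1r.le)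
      calc r * (1 - r ^ n) = (1 - r) * (r * ((1 - r ^ n) / (1 - r))) := by
            field_simp
          _ ≤ (S / n) * (r * ((1 - r ^ n) / (1 - r))) :=
            mul_le_mul_of_nonneg_right hone_sub hpos2
    calc r * (1 - Real.exp (-S)) ≤ (S / n) * (r * ((r ^ n - 1) / (r - 1))) := hfinal
      _ = ∑ i ∈ Finset.range n, Real.exp (-(((i:ℝ)+1) * S / n)) * (S / n) := hsum2.symm
      _ ≤ ∫ t in (T 0)..(T n), G t := hsum
      _ ≤ ∫ t in x..b, G t := hextend
  -- take limit
  have hlim : Tendsto (fun n : ℕ => Real.exp (-(S / n)) * (1 - Real.exp (-S)))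
      atTop (nhds (1 * (1 - Real.exp (-S)))) := by
    have h1 : Tendsto (fun n : ℕ => S / (n:ℝ)) atTop (nhds 0) :=
      tendsto_const_div_atTop_nhds_zero_nat S
    have h2 : Tendsto (fun n : ℕ => Real.exp (-(S / n))) atTop (nhds 1) := by
      have h0 : Tendsto (fun n : ℕ => -(S / (n:ℝ))) atTop (nhds 0) := by
        simpa using h1.neg
      have := (Real.continuous_exp.tendsto 0).comp h0
      simpa [Function.comp_def] using this
    exact h2.mul_const _
  have := le_of_tendsto hlim (eventually_atTop.2 ⟨1, fun n hn => key n hn⟩)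
  linarith


set_option maxHeartbeats 1000000 in
/-- **Density-representation setting** (Nourdin–Viens): `X` is a centered integrable random
variable whose law has Lebesgue density `ρ`, positive on `(a, ∞)` (with `−∞ ≤ a < 0`) and
vanishing outside; `g > 0` on `(a, ∞)` with `y ↦ y/g(y)` locally integrable there;
`A(x) = exp(−∫_0^x y/g(y) dy)`; and `ρ(x) = (E|X|/2) A(x)/g(x)` a.e. on `(a, ∞)`. -/
theorem tail_lower_bound_gaussian {Ω : Type*} {mΩ : MeasurableSpace Ω} (μ : Measure Ω)
    [IsProbabilityMeasure μ] (X : Ω → ℝ) (hXm : Measurable X)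
    (hXint : Integrable X μ) (hcen : ∫ ω, X ω ∂μ = 0)
    (ρ g : ℝ → ℝ) (a : EReal) (ha : a < 0)
    (hmap : Measure.map X μ = volume.withDensity fun x => ENNReal.ofReal (ρ x))
    (hρpos : ∀ x : ℝ, a < (x : EReal) → 0 < ρ x)
    (hρzero : ∀ x : ℝ, (x : EReal) ≤ a → ρ x = 0)
    (hgpos : ∀ x : ℝ, a < (x : EReal) → 0 < g x)
    (hloc : ∀ u v : ℝ, a < (u : EReal) → IntegrableOn (fun y => y / g y) (Set.Icc u v) volume)
    (A : ℝ → ℝ) (hA : ∀ x : ℝ, A x = Real.exp (-∫ y in (0 : ℝ)..x, y / g y))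
    (hρA : ∀ᵐ x : ℝ ∂volume, a < (x : EReal) →
      ρ x = (∫ ω, |X ω| ∂μ) / 2 * A x / g x)
    (c' z₀ : ℝ) (hc' : c' ∈ Set.Ioo (0 : ℝ) 1) (hz₀ : 1 < z₀)
    (hgub : ∀ x : ℝ, z₀ < x → g x ≤ c' * x ^ 2)
    (hglb : ∀ x : ℝ, a < (x : EReal) → 1 ≤ g x) :
    ∀ x : ℝ, z₀ < x →
      (μ {ω | x < X ω}).toReal ≥
        (∫ ω, |X ω| ∂μ) / 2 * (c' ^ c' / (1 + c') ^ (1 + c')) *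
          (x⁻¹ * Real.exp (-x ^ 2 / 2)) := by
  obtain ⟨hc0, hc1⟩ := hc'
  intro x hx
  set M := ∫ ω, |X ω| ∂μ with hM
  have hMnn : 0 ≤ M := integral_nonneg fun ω => abs_nonneg _
  have hx0 : (0:ℝ) < x := lt_trans (lt_trans one_pos hz₀) hx
  set lam : ℝ := ((1 + c') / c') ^ c' with hlam
  have hbase : 1 < (1 + c') / c' := by
    rw [lt_div_iff₀ hc0]; linarith
  have hlam1 : 1 < lam :=
    (Real.one_lt_rpow_iff_of_pos (by linarith)).2 (Or.inl ⟨hbase, hc0⟩)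
  set b := lam * x with hb
  have hxb : x ≤ b := by nlinarith
  have hb0 : 0 < b := lt_of_lt_of_le hx0 hxb
  have haR : ∀ t : ℝ, 0 ≤ t → a < (t : EReal) := fun t ht =>
    lt_of_lt_of_le ha (EReal.coe_nonneg.2 ht)
  -- integrability facts for h := fun y => y / g y
  have hint_xb : IntegrableOn (fun y => y / g y) (Set.Icc x b) volume :=
    hloc x b (haR x hx0.le)
  have hint_0x : IntegrableOn (fun y => y / g y) (Set.Icc 0 x) volume :=
    hloc 0 x (haR 0 le_rfl)
  have hii_0x : IntervalIntegrable (fun y => y / g y) volume 0 x := by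
    refine IntegrableOn.intervalIntegrable ?_
    rwa [Set.uIcc_of_le hx0.le]
  have hii_xt : ∀ t ∈ Set.Icc x b, IntervalIntegrable (fun y => y / g y) volume x t :=
    fun t ht => (hint_xb.mono_set (uIcc_subset_Icc ⟨le_rfl, hxb⟩ ht)).intervalIntegrable
  have hposxb : ∀ t ∈ Set.Icc x b, 0 ≤ t / g t := by
    intro t ht
    have ht0 : 0 < t := lt_of_lt_of_le hx0 ht.1
    exact div_nonneg ht0.le (hgpos t (haR t ht0.le)).le
  -- A x ≥ exp(-x²/2)
  have hAx0 : 0 < A x := by rw [hA x]; exact Real.exp_pos _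
  have hAx : Real.exp (-x ^ 2 / 2) ≤ A x := by
    rw [hA x]
    apply Real.exp_le_exp.2
    have h1 : (∫ y in (0:ℝ)..x, y / g y) ≤ ∫ y in (0:ℝ)..x, y := by
      refine intervalIntegral.integral_mono_on hx0.le hii_0x
        intervalIntegral.intervalIntegrable_id ?_
      intro t ht
      exact div_le_self ht.1 (hglb t (haR t ht.1))
    rw [integral_id] at h1
    nlinarith
  -- lower bound for ∫ h over [x, b]
  have hhS : Real.log ((1 + c') / c') ≤ ∫ t in x..b, t / g t := by
    have hlow : ∀ t ∈ Set.Icc x b, (c' * t)⁻¹ ≤ t / g t := by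
      intro t ht
      have ht0 : 0 < t := lt_of_lt_of_le hx0 ht.1
      have hgt : 0 < g t := hgpos t (haR t ht0.le)
      have hub : g t ≤ c' * t ^ 2 := hgub t (lt_of_lt_of_le hx ht.1)
      rw [inv_eq_one_div, div_le_div_iff₀ (by positivity) hgt]
      nlinarith
    have hciInt : IntervalIntegrable (fun t => (c' * t)⁻¹) volume x b := by
      apply ContinuousOn.intervalIntegrable
      apply ContinuousOn.inv₀
      · exact (continuous_const.mul continuous_id).continuousOn
      · intro t ht
        rw [Set.uIcc_of_le hxb] at ht
        have : 0 < t := lt_of_lt_of_le hx0 ht.1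
        positivity
    have h2 := intervalIntegral.integral_mono_on hxb hciInt
      (hint_xb.mono_set (by rw [Set.uIcc_of_le hxb])).intervalIntegrable hlow
    have h3 : (∫ t in x..b, (c' * t)⁻¹) = Real.log ((1 + c') / c') := by
      have : (fun t : ℝ => (c' * t)⁻¹) = fun t : ℝ => c'⁻¹ * t⁻¹ := by
        funext t; rw [mul_inv]
      rw [this, intervalIntegral.integral_const_mul, integral_inv_of_pos hx0 hb0, hb,
        mul_div_assoc, div_self (ne_of_gt hx0), mul_one, hlam,
        Real.log_rpow (by positivity), inv_mul_cancel_left₀ (ne_of_gt hc0)]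
    linarith
  have hexpS : Real.exp (-∫ t in x..b, t / g t) ≤ c' / (1 + c') := by
    have h1 : Real.exp (-∫ t in x..b, t / g t)
        ≤ Real.exp (Real.log (c' / (1 + c'))) := by
      apply Real.exp_le_exp.2
      have hlog : Real.log (c' / (1 + c')) = -Real.log ((1 + c') / c') := by
        rw [← Real.log_inv, inv_div]
      rw [hlog]
      linarith
    rwa [Real.exp_log (by positivity)] at h1
  -- key integral lower bound
  have hkey : 1 - Real.exp (-∫ t in x..b, t / g t) ≤
      ∫ t in x..b, (t / g t) * Real.exp (-∫ s in x..t, s / g s) :=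
    key_exp_integral_s15 hxb hint_xb hposxb
  have h1c : 1 / (1 + c') ≤ ∫ t in x..b, (t / g t) * Real.exp (-∫ s in x..t, s / g s) := by
    have h2 : c' / (1 + c') + 1 / (1 + c') = 1 := by
      field_simp
      ring
    linarith
  -- A(t) decomposition on [x, b]
  have hAt : ∀ t ∈ Set.Icc x b, A t = A x * Real.exp (-∫ s in x..t, s / g s) := by
    intro t ht
    rw [hA t, hA x, ← Real.exp_add]
    congr 1
    have h1 := intervalIntegral.integral_add_adjacent_intervals hii_0x (hii_xt t ht)
    linarith
  set C : ℝ := M / (2 * b) * A x with hC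
  have hCnn : 0 ≤ C := by positivity
  set I := ∫ t in x..b, (t / g t) * Real.exp (-∫ s in x..t, s / g s) with hI
  -- integrability of the lower bound function on Ioc x b
  have hGint : IntegrableOn
      (fun t => C * ((t / g t) * Real.exp (-∫ s in x..t, s / g s)))
      (Set.Ioc x b) volume :=
    (((G_integrableOn hxb hint_xb hposxb).mono_set Set.Ioc_subset_Icc_self).const_mul C)
  -- a.e. pointwise comparison with ρ on Ioc x b
  have hae : ∀ᵐ t ∂(volume.restrict (Set.Ioc x b)),
      ENNReal.ofReal (C * ((t / g t) * Real.exp (-∫ s in x..t, s / g s)))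
        ≤ ENNReal.ofReal (ρ t) := by
    filter_upwards [ae_restrict_of_ae hρA, ae_restrict_mem measurableSet_Ioc]
      with t hρt hmem
    have ht0 : 0 < t := lt_trans hx0 hmem.1
    have hgt : 0 < g t := hgpos t (haR t ht0.le)
    have hρt' := hρt (haR t ht0.le)
    apply ENNReal.ofReal_le_ofReal
    rw [hρt', hAt t ⟨hmem.1.le, hmem.2⟩]
    set e := Real.exp (-∫ s in x..t, s / g s) with he
    have he0 : 0 < e := Real.exp_pos _
    have hfact : M / (2 * b) * t ≤ M / 2 := by
      rw [div_mul_eq_mul_div, div_le_div_iff₀ (by positivity) two_pos]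
      nlinarith [hmem.2]
    calc C * (t / g t * e) = (M / (2 * b) * t) * (A x * e / g t) := by
          rw [hC]; field_simp
      _ ≤ (M / 2) * (A x * e / g t) :=
          mul_le_mul_of_nonneg_right hfact (by positivity)
      _ = M / 2 * (A x * e) / g t := by ring
  -- measure computation
  have hmeasIoi : μ {ω | x < X ω} = ∫⁻ t in Set.Ioi x, ENNReal.ofReal (ρ t) := by
    have h1 : {ω | x < X ω} = X ⁻¹' Set.Ioi x := rfl
    rw [h1, ← Measure.map_apply hXm measurableSet_Ioi, hmap,
      withDensity_apply _ measurableSet_Ioi]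
  have hchain : ENNReal.ofReal (C * ∫ t in Set.Ioc x b,
      (t / g t) * Real.exp (-∫ s in x..t, s / g s)) ≤ μ {ω | x < X ω} := by
    rw [hmeasIoi]
    have heq : ENNReal.ofReal (∫ t in Set.Ioc x b,
        C * ((t / g t) * Real.exp (-∫ s in x..t, s / g s)))
        = ∫⁻ t in Set.Ioc x b, ENNReal.ofReal
            (C * ((t / g t) * Real.exp (-∫ s in x..t, s / g s))) := by
      refine ofReal_integral_eq_lintegral_ofReal hGint ?_
      filter_upwards [ae_restrict_mem measurableSet_Ioc] with t hmem
      have ht0 : 0 < t := lt_trans hx0 hmem.1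
      have hgt : 0 < g t := hgpos t (haR t ht0.le)
      positivity
    calc ENNReal.ofReal (C * ∫ t in Set.Ioc x b,
          (t / g t) * Real.exp (-∫ s in x..t, s / g s))
        = ENNReal.ofReal (∫ t in Set.Ioc x b,
            C * ((t / g t) * Real.exp (-∫ s in x..t, s / g s))) := by
          rw [integral_const_mul]
      _ = ∫⁻ t in Set.Ioc x b, ENNReal.ofReal
            (C * ((t / g t) * Real.exp (-∫ s in x..t, s / g s))) := heq
      _ ≤ ∫⁻ t in Set.Ioc x b, ENNReal.ofReal (ρ t) := lintegral_mono_ae hae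
      _ ≤ ∫⁻ t in Set.Ioi x, ENNReal.ofReal (ρ t) :=
          lintegral_mono' (Measure.restrict_mono Set.Ioc_subset_Ioi_self le_rfl) le_rfl
  -- final arithmetic
  have hIoc : (∫ t in Set.Ioc x b, (t / g t) * Real.exp (-∫ s in x..t, s / g s)) = I := by
    rw [hI, intervalIntegral.integral_of_le hxb]
  have hconst : c' ^ c' / (1 + c') ^ (1 + c') * (lam * (1 + c')) = 1 := by
    have hp1 : (0:ℝ) < c' ^ c' := Real.rpow_pos_of_pos hc0 _
    have hp2 : (0:ℝ) < (1 + c') ^ c' := Real.rpow_pos_of_pos (by linarith) _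
    rw [hlam, Real.div_rpow (by linarith : (0:ℝ) ≤ 1 + c') hc0.le,
      Real.rpow_add (by linarith : (0:ℝ) < 1 + c') 1 c', Real.rpow_one]
    field_simp
  have hfin : M / 2 * (c' ^ c' / (1 + c') ^ (1 + c')) *
      (x⁻¹ * Real.exp (-x ^ 2 / 2)) ≤ C * I := by
    have hIp : 1 / (1 + c') ≤ I := h1c
    have hD0 : (0:ℝ) < lam * (1 + c') := by positivity
    have hK : c' ^ c' / (1 + c') ^ (1 + c') = 1 / (lam * (1 + c')) := by
      rw [eq_div_iff (ne_of_gt hD0)]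
      exact hconst
    have step1 : M / (2 * b) * (Real.exp (-x ^ 2 / 2) * (1 / (1 + c')))
        ≤ C * I := by
      rw [hC, mul_assoc]
      refine mul_le_mul_of_nonneg_left ?_ (by positivity)
      exact mul_le_mul hAx hIp (by positivity) hAx0.le
    have heq2 : M / 2 * (c' ^ c' / (1 + c') ^ (1 + c')) *
        (x⁻¹ * Real.exp (-x ^ 2 / 2))
        = M / (2 * b) * (Real.exp (-x ^ 2 / 2) * (1 / (1 + c'))) := by
      have hx' : x ≠ 0 := ne_of_gt hx0
      have hlam0 : lam ≠ 0 := by positivity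
      have h1c0 : (1 + c') ≠ 0 := by positivity
      rw [hK, hb]
      simp only [one_div, div_eq_mul_inv, mul_inv]
      ring
    linarith
  have hofReal : ENNReal.ofReal (M / 2 * (c' ^ c' / (1 + c') ^ (1 + c')) *
      (x⁻¹ * Real.exp (-x ^ 2 / 2))) ≤ μ {ω | x < X ω} := by
    refine le_trans (ENNReal.ofReal_le_ofReal ?_) hchain
    rwa [hIoc]
  exact (ENNReal.ofReal_le_iff_le_toReal (measure_ne_top μ _)).1 hofReal
end

section
/- In the density-representation setting, assume that for some c′ ∈ (0,1) and z₀ > 1 one has g(x) ≤ c′ x² for all x > z₀, and that moreover g(x) ≥ c″ x² for all x > z₀, where c″ ∈ (0, c′]. Then there is a constant K′ > 0 (one may take K′ = (E|X|/2) · (c′)^{c′}(1+c′)^{−1−c′} · A(z₀) · z₀^{1/c″}) such that for every x > z₀: P[X > x] ≥ K′ · x^{−1−1/c″}. -/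
open MeasureTheory

open Set intervalIntegral

private lemma ftc_exp_lower (f : ℝ → ℝ) (x b : ℝ) (hxb : x ≤ b)
    (hf : IntegrableOn f (Icc x b)) (hf0 : ∀ t ∈ Icc x b, 0 ≤ f t) :
    1 - Real.exp (-(∫ t in x..b, f t)) ≤
      ∫ t in x..b, Real.exp (-(∫ s in x..t, f s)) * f t := by
  set F : ℝ → ℝ := fun v => ∫ s in x..v, f s with hFdef
  set E : ℝ → ℝ := fun t => Real.exp (-(F t)) * f t with hEdef
  have hii : ∀ u v, u ∈ Icc x b → v ∈ Icc x b → IntervalIntegrable f volume u v := by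
    intro u v hu hv
    exact (hf.mono_set (uIcc_subset_Icc hu hv)).intervalIntegrable
  have hxmem : x ∈ Icc x b := ⟨le_rfl, hxb⟩
  have hbmem : b ∈ Icc x b := ⟨hxb, le_rfl⟩
  have hFadd : ∀ u v, u ∈ Icc x b → v ∈ Icc x b → F u + ∫ s in u..v, f s = F v := by
    intro u v hu hv
    exact integral_add_adjacent_intervals (hii x u hxmem hu) (hii u v hu hv)
  have hFmono : ∀ u v, u ∈ Icc x b → v ∈ Icc x b → u ≤ v → F u ≤ F v := by
    intro u v hu hv huv
    have h1 : (0:ℝ) ≤ ∫ s in u..v, f s := by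
      apply intervalIntegral.integral_nonneg huv
      intro t ht
      exact hf0 t ⟨hu.1.trans ht.1, ht.2.trans hv.2⟩
    have := hFadd u v hu hv
    linarith
  have hFx : F x = 0 := integral_same
  have hF0 : ∀ v ∈ Icc x b, 0 ≤ F v := by
    intro v hv
    have := hFmono x v hxmem hv hv.1
    linarith [hFx ▸ this]
  have hFcont : ContinuousOn F (Icc x b) := by
    have := intervalIntegral.continuousOn_primitive_interval (μ := volume) (a := x) (b := b)
      (f := f) (by rwa [uIcc_of_le hxb])
    rwa [uIcc_of_le hxb] at this
  have hEcont : ContinuousOn (fun t => Real.exp (-(F t))) (Icc x b) :=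
    Real.continuous_exp.comp_continuousOn hFcont.neg
  have hEint : IntegrableOn E (Icc x b) := by
    obtain ⟨C, hC⟩ := isCompact_Icc.exists_bound_of_continuousOn hEcont
    refine Integrable.bdd_mul (c := C) hf
      (hEcont.aestronglyMeasurable measurableSet_Icc) ?_
    filter_upwards [ae_restrict_mem measurableSet_Icc] with t ht
    exact hC t ht
  have hiiE : ∀ u v, u ∈ Icc x b → v ∈ Icc x b → IntervalIntegrable E volume u v := by
    intro u v hu hv
    exact (hEint.mono_set (uIcc_subset_Icc hu hv)).intervalIntegrable
  -- step inequality
  have step : ∀ u v, u ∈ Icc x b → v ∈ Icc x b → u ≤ v →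
      Real.exp (-(F u)) - Real.exp (-(F v)) ≤
        (∫ t in u..v, E t) + (F v - F u)^2 := by
    intro u v hu hv huv
    have hΔ : 0 ≤ F v - F u := by linarith [hFmono u v hu hv huv]
    have h1 : ∫ t in u..v, Real.exp (-(F v)) * f t ≤ ∫ t in u..v, E t := by
      apply intervalIntegral.integral_mono_on huv ((hii u v hu hv).const_mul _)
        (hiiE u v hu hv)
      intro t ht
      have htm : t ∈ Icc x b := ⟨hu.1.trans ht.1, ht.2.trans hv.2⟩
      have : F t ≤ F v := hFmono t v htm hv ht.2
      exact mul_le_mul_of_nonneg_right (Real.exp_le_exp.2 (by linarith)) (hf0 t htm)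
    have h2 : ∫ t in u..v, Real.exp (-(F v)) * f t = Real.exp (-(F v)) * (F v - F u) := by
      rw [intervalIntegral.integral_const_mul]
      have := hFadd u v hu hv
      congr 1
      linarith
    have hev : Real.exp (-(F v)) = Real.exp (-(F u)) * Real.exp (-(F v - F u)) := by
      rw [← Real.exp_add]; ring_nf
    have he1 : 1 - (F v - F u) ≤ Real.exp (-(F v - F u)) := by
      have := Real.add_one_le_exp (-(F v - F u)); linarith
    have hcu1 : Real.exp (-(F u)) ≤ 1 := by
      rw [Real.exp_le_one_iff]
      simpa using hF0 u hu
    have hcupos := Real.exp_pos (-(F u))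
    nlinarith [h1, h2, mul_nonneg hΔ hΔ, Real.exp_pos (-(F v - F u)),
      mul_le_mul_of_nonneg_left he1 hcupos.le,
      mul_le_mul_of_nonneg_right hcu1 (mul_nonneg hΔ hΔ)]
  -- induction over partition points
  have main : ∀ i : ℕ, ∀ d : ℝ, 0 ≤ d → ∀ v ∈ Icc x b, F v = i * d →
      1 - Real.exp (-(F v)) ≤ (∫ t in x..v, E t) + i * d^2 := by
    intro i
    induction i with
    | zero =>
      intro d hd v hv hFv
      push_cast at hFv
      rw [hFv]
      have : (0:ℝ) ≤ ∫ t in x..v, E t := by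
        apply intervalIntegral.integral_nonneg hv.1
        intro t ht
        exact mul_nonneg (Real.exp_pos _).le (hf0 t ⟨ht.1, ht.2.trans hv.2⟩)
      simp only [zero_mul] at hFv ⊢
      push_cast
      simpa using this
    | succ i ih =>
      intro d hd v hv hFv
      have hmem : (i:ℝ) * d ∈ Icc (F x) (F v) := by
        constructor
        · rw [hFx]; positivity
        · rw [hFv]; push_cast; nlinarith
      obtain ⟨u, hu, hFu⟩ := intermediate_value_Icc hv.1
        (hFcont.mono (Icc_subset_Icc le_rfl hv.2)) hmem
      have huI : u ∈ Icc x b := ⟨hu.1, hu.2.trans hv.2⟩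
      have h1 := ih d hd u huI hFu
      have h2 := step u v huI hv hu.2
      have h3 : (∫ t in x..u, E t) + ∫ t in u..v, E t = ∫ t in x..v, E t :=
        integral_add_adjacent_intervals (hiiE x u hxmem huI) (hiiE u v huI hv)
      have hΔ : F v - F u = d := by rw [hFv, hFu]; push_cast; ring
      rw [hΔ] at h2
      push_cast
      nlinarith [h1, h2, h3]
  have hD0 : 0 ≤ F b := hF0 b hbmem
  have hfin : ∀ ε : ℝ, 0 < ε → 1 - Real.exp (-(F b)) ≤ (∫ t in x..b, E t) + ε := by
    intro ε hε
    obtain ⟨n, hn⟩ := exists_nat_gt ((F b)^2 / ε)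
    have hn1 : (0:ℝ) < (n:ℝ) + 1 := by positivity
    have h := main (n+1) (F b / ((n:ℝ)+1)) (by positivity) b hbmem (by push_cast; field_simp)
    have heq : ((n:ℝ)+1) * (F b / ((n:ℝ)+1))^2 = (F b)^2 / ((n:ℝ)+1) := by
      field_simp
    push_cast at h
    rw [heq] at h
    refine h.trans ?_
    have : (F b)^2 / ((n:ℝ)+1) ≤ ε := by
      rw [div_le_iff₀ hn1]
      have h2 : (F b)^2 / ε < (n:ℝ) := hn
      rw [div_lt_iff₀ hε] at h2
      nlinarith
    linarith
  have := le_of_forall_pos_le_add hfin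
  simpa [hEdef, hFdef] using this

set_option maxHeartbeats 1000000

/-- **Density-representation setting** (Nourdin–Viens): `X` is a centered integrable random
variable whose law has Lebesgue density `ρ`, positive on `(a, ∞)` (with `−∞ ≤ a < 0`) and
vanishing outside; `g > 0` on `(a, ∞)` with `y ↦ y/g(y)` locally integrable there;
`A(x) = exp(−∫_0^x y/g(y) dy)`; and `ρ(x) = (E|X|/2) A(x)/g(x)` a.e. on `(a, ∞)`. -/
theorem tail_lower_bound_polynomial {Ω : Type*} {mΩ : MeasurableSpace Ω} (μ : Measure Ω)
    [IsProbabilityMeasure μ] (X : Ω → ℝ) (hXm : Measurable X)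
    (hXint : Integrable X μ) (hcen : ∫ ω, X ω ∂μ = 0)
    (ρ g : ℝ → ℝ) (a : EReal) (ha : a < 0)
    (hmap : Measure.map X μ = volume.withDensity fun x => ENNReal.ofReal (ρ x))
    (hρpos : ∀ x : ℝ, a < (x : EReal) → 0 < ρ x)
    (hρzero : ∀ x : ℝ, (x : EReal) ≤ a → ρ x = 0)
    (hgpos : ∀ x : ℝ, a < (x : EReal) → 0 < g x)
    (hloc : ∀ u v : ℝ, a < (u : EReal) → IntegrableOn (fun y => y / g y) (Set.Icc u v) volume)
    (A : ℝ → ℝ) (hA : ∀ x : ℝ, A x = Real.exp (-∫ y in (0 : ℝ)..x, y / g y))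
    (hρA : ∀ᵐ x : ℝ ∂volume, a < (x : EReal) →
      ρ x = (∫ ω, |X ω| ∂μ) / 2 * A x / g x)
    (c' c'' z₀ : ℝ) (hc' : c' ∈ Set.Ioo (0 : ℝ) 1) (hc'' : c'' ∈ Set.Ioc (0 : ℝ) c')
    (hz₀ : 1 < z₀)
    (hgub : ∀ x : ℝ, z₀ < x → g x ≤ c' * x ^ 2)
    (hglb : ∀ x : ℝ, z₀ < x → c'' * x ^ 2 ≤ g x) :
    ∀ x : ℝ, z₀ < x →
      (μ {ω | x < X ω}).toReal ≥
        ((∫ ω, |X ω| ∂μ) / 2 * (c' ^ c' / (1 + c') ^ (1 + c')) * A z₀ * z₀ ^ (1 / c'')) *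
          x ^ (-1 - 1 / c'') := by
  obtain ⟨hc'0, hc'1⟩ := hc'
  obtain ⟨hc''0, hc''le⟩ := hc''
  intro x hx
  have hz₀0 : (0:ℝ) < z₀ := lt_trans one_pos hz₀
  have hx0 : (0:ℝ) < x := lt_trans hz₀0 hx
  have haR : ∀ t : ℝ, 0 < t → a < (t : EReal) := by
    intro t ht
    refine lt_of_lt_of_le ha ?_
    rw [← EReal.coe_zero]
    exact_mod_cast ht.le
  set M : ℝ := ∫ ω, |X ω| ∂μ with hM
  have hM0 : 0 ≤ M := integral_nonneg fun ω => abs_nonneg _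
  set lam : ℝ := ((1 + c') / c') ^ c' with hlam
  have hbase1 : 1 < (1 + c') / c' := by rw [lt_div_iff₀ hc'0]; linarith
  have hlam1 : 1 < lam :=
    (Real.one_lt_rpow_iff_of_pos (by positivity)).2 (Or.inl ⟨hbase1, hc'0⟩)
  have hlampos : (0:ℝ) < lam := lt_trans one_pos hlam1
  set b : ℝ := lam * x with hb
  have hxb : x < b := by nlinarith
  have hb0 : (0:ℝ) < b := lt_trans hx0 hxb
  set f : ℝ → ℝ := fun y => y / g y with hfdef
  have hgposx : ∀ t : ℝ, z₀ < t → 0 < g t := fun t ht => hgpos t (haR t (lt_trans hz₀0 ht))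
  have ha0 : a < ((0:ℝ) : EReal) := by rw [EReal.coe_zero]; exact ha
  have hf0v : ∀ v : ℝ, IntegrableOn f (Icc 0 v) := fun v => hloc 0 v ha0
  have hiif : ∀ u v : ℝ, 0 ≤ u → v ≤ b → u ≤ v → IntervalIntegrable f volume u v := by
    intro u v hu hv huv
    refine ((hf0v b).mono_set ?_).intervalIntegrable
    rw [uIcc_of_le huv]
    exact Icc_subset_Icc hu hv
  have hApos : ∀ t : ℝ, 0 < A t := by
    intro t; rw [hA]; exact Real.exp_pos _
  set G : ℝ → ℝ := fun v => ∫ s in (0:ℝ)..v, f s with hG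
  set F : ℝ → ℝ := fun v => ∫ s in x..v, f s with hF
  have hAG : ∀ t : ℝ, A t = Real.exp (-(G t)) := hA
  have hAsplit : ∀ t ∈ Icc x b, A t = A x * Real.exp (-(F t)) := by
    intro t ht
    have hadd : G x + ∫ s in x..t, f s = G t :=
      integral_add_adjacent_intervals (hiif 0 x le_rfl hxb.le hx0.le)
        (hiif x t hx0.le ht.2 ht.1)
    rw [hAG, hAG, ← hadd, neg_add, Real.exp_add]
  have hGcont : ContinuousOn G (Icc 0 b) := by
    have := intervalIntegral.continuousOn_primitive_interval (μ := volume) (a := (0:ℝ))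
      (b := b) (f := f) (by rw [uIcc_of_le hb0.le]; exact hf0v b)
    rwa [uIcc_of_le hb0.le] at this
  have hAcont : ContinuousOn A (Icc x b) := by
    have h1 : ContinuousOn (fun t => Real.exp (-(G t))) (Icc x b) :=
      Real.continuous_exp.comp_continuousOn
        ((hGcont.mono (Icc_subset_Icc hx0.le le_rfl)).neg)
    exact h1.congr fun t _ => hAG t
  -- ψ
  set ψ : ℝ → ℝ := fun t => M / (2*b) * (A t * f t) with hψ
  have hAfint : IntegrableOn (fun t => A t * f t) (Ioc x b) := by
    obtain ⟨C, hC⟩ := isCompact_Icc.exists_bound_of_continuousOn hAcont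
    refine Integrable.bdd_mul (c := C)
      (((hloc x b (haR x hx0)).mono_set Ioc_subset_Icc_self))
      ((hAcont.mono Ioc_subset_Icc_self).aestronglyMeasurable measurableSet_Ioc) ?_
    filter_upwards [ae_restrict_mem measurableSet_Ioc] with t ht
    exact hC t (Ioc_subset_Icc_self ht)
  have hψint : IntegrableOn ψ (Ioc x b) := hAfint.const_mul _
  have hψnn : 0 ≤ᵐ[volume.restrict (Ioc x b)] ψ := by
    filter_upwards [ae_restrict_mem measurableSet_Ioc] with t ht
    have ht0 : 0 < t := lt_trans hx0 ht.1
    have hg := hgposx t (lt_trans hx ht.1)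
    have : 0 ≤ f t := div_nonneg ht0.le hg.le
    have := (hApos t).le
    positivity
  have hψρ : ∀ᵐ t ∂(volume.restrict (Ioc x b)),
      ENNReal.ofReal (ψ t) ≤ ENNReal.ofReal (ρ t) := by
    filter_upwards [ae_restrict_of_ae hρA, ae_restrict_mem measurableSet_Ioc] with t hrep ht
    have ht0 : 0 < t := lt_trans hx0 ht.1
    have hg := hgposx t (lt_trans hx ht.1)
    have hrep' := hrep (haR t ht0)
    apply ENNReal.ofReal_le_ofReal
    rw [hrep']
    have hAp := hApos t
    show M / (2*b) * (A t * f t) ≤ M / 2 * A t / g t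
    rw [hfdef]
    simp only
    have h1 : M / (2*b) * (A t * (t / g t)) = M * A t * t / (2*b*g t) := by
      field_simp
    have h2 : M / 2 * A t / g t = M * A t * b / (2*b*g t) := by
      field_simp
    rw [show M / (2 * b) * (A t * (t / g t)) = M * A t * t / (2 * b * g t) from h1, h2]
    apply div_le_div_of_nonneg_right ?_ (by positivity)
    · nlinarith [ht.2, mul_nonneg hM0 hAp.le]
  -- measure identity
  have hμeq : μ {ω | x < X ω} = ∫⁻ t in Set.Ioi x, ENNReal.ofReal (ρ t) := by
    have hset : {ω | x < X ω} = X ⁻¹' (Set.Ioi x) := rfl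
    rw [hset, ← Measure.map_apply hXm measurableSet_Ioi, hmap,
      withDensity_apply _ measurableSet_Ioi]
  -- key integral lower bound
  have hfIcc : IntegrableOn f (Icc x b) := hloc x b (haR x hx0)
  have hfnn : ∀ t ∈ Icc x b, 0 ≤ f t := by
    intro t ht
    have ht0 : 0 < t := lt_of_lt_of_le hx0 ht.1
    exact div_nonneg ht0.le (hgposx t (lt_of_lt_of_le hx ht.1)).le
  have hkey := ftc_exp_lower f x b hxb.le hfIcc hfnn
  have hI2 : A x * (1 - Real.exp (-(F b))) ≤ ∫ t in Ioc x b, A t * f t := by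
    have hcongr : ∫ t in Ioc x b, A t * f t
        = ∫ t in Ioc x b, A x * (Real.exp (-(F t)) * f t) := by
      apply setIntegral_congr_fun measurableSet_Ioc
      intro t ht
      show A t * f t = A x * (Real.exp (-(F t)) * f t)
      rw [hAsplit t (Ioc_subset_Icc_self ht)]
      ring
    rw [hcongr, MeasureTheory.integral_const_mul,
      ← intervalIntegral.integral_of_le hxb.le]
    exact mul_le_mul_of_nonneg_left hkey (hApos x).le
  -- exp(-F b) ≤ c'/(1+c')
  have hFb : Real.exp (-(F b)) ≤ c' / (1 + c') := by
    have hlow : (1/c') * Real.log (b/x) ≤ F b := by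
      have h1 : ∫ t in Ioc x b, (fun y => 1/c' * (1/y)) t ≤ ∫ t in Ioc x b, f t := by
        apply setIntegral_mono_on ?_ ?_ measurableSet_Ioc
        · intro y hy
          have hy0 : 0 < y := lt_trans hx0 hy.1
          have hgy := hgposx y (lt_trans hx hy.1)
          have hub := hgub y (lt_trans hx hy.1)
          show 1/c' * (1/y) ≤ y / g y
          rw [one_div_mul_one_div, div_le_div_iff₀ (by positivity) hgy]
          nlinarith
        · refine (ContinuousOn.integrableOn_compact (isCompact_Icc (a := x) (b := b))
            ?_).mono_set Ioc_subset_Icc_self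
          apply ContinuousOn.mul continuousOn_const
          apply ContinuousOn.div continuousOn_const continuousOn_id
          intro y hy
          exact (lt_of_lt_of_le hx0 hy.1).ne'
        · exact hfIcc.mono_set Ioc_subset_Icc_self
      have h2 : ∫ t in Ioc x b, (fun y => 1/c' * (1/y)) t = 1/c' * Real.log (b/x) := by
        rw [← intervalIntegral.integral_of_le hxb.le,
          intervalIntegral.integral_const_mul, integral_one_div]
        intro h0
        rw [uIcc_of_le hxb.le] at h0
        exact absurd h0.1 (not_le.2 hx0)
      have h3 : F b = ∫ t in Ioc x b, f t := intervalIntegral.integral_of_le hxb.le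
      rw [h3]; rw [← h2]; exact h1
    have hbx : b / x = lam := by rw [hb]; field_simp
    have : Real.exp (-(F b)) ≤ Real.exp (-(1/c' * Real.log lam)) := by
      apply Real.exp_le_exp.2
      rw [hbx] at hlow
      linarith
    refine this.trans ?_
    have h4 : Real.exp (-(1/c' * Real.log lam)) = lam ^ (-(1/c')) := by
      rw [Real.rpow_def_of_pos hlampos]
      congr 1
      ring
    rw [h4, hlam, ← Real.rpow_mul (by positivity : (0:ℝ) ≤ (1 + c') / c')]
    have : c' * (-(1/c')) = -1 := by field_simp
    rw [this, Real.rpow_neg_one, inv_div]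
  -- A x lower bound
  have hAx : A z₀ * (z₀ ^ (1/c'') * x ^ (-(1/c''))) ≤ A x := by
    set J : ℝ := ∫ s in z₀..x, f s with hJ
    have hAxJ : A x = A z₀ * Real.exp (-J) := by
      have hadd : G z₀ + ∫ s in z₀..x, f s = G x :=
        integral_add_adjacent_intervals (hiif 0 z₀ le_rfl (le_trans hx.le hxb.le) hz₀0.le)
          (hiif z₀ x hz₀0.le hxb.le hx.le)
      rw [hAG, hAG, ← hadd, neg_add, Real.exp_add]
    have hJub : J ≤ 1/c'' * Real.log (x/z₀) := by
      have h1 : ∫ t in Ioc z₀ x, f t ≤ ∫ t in Ioc z₀ x, (fun y => 1/c'' * (1/y)) t := by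
        apply setIntegral_mono_on ?_ ?_ measurableSet_Ioc
        · intro y hy
          have hy0 : 0 < y := lt_trans hz₀0 hy.1
          have hgy := hgposx y hy.1
          have hlb := hglb y hy.1
          show y / g y ≤ 1/c'' * (1/y)
          rw [one_div_mul_one_div, div_le_div_iff₀ hgy (by positivity)]
          nlinarith
        · exact (hloc z₀ x (haR z₀ hz₀0)).mono_set Ioc_subset_Icc_self
        · refine (ContinuousOn.integrableOn_compact (isCompact_Icc (a := z₀) (b := x))
            ?_).mono_set Ioc_subset_Icc_self
          apply ContinuousOn.mul continuousOn_const
          apply ContinuousOn.div continuousOn_const continuousOn_id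
          intro y hy
          exact (lt_of_lt_of_le hz₀0 hy.1).ne'
      have h2 : ∫ t in Ioc z₀ x, (fun y => 1/c'' * (1/y)) t = 1/c'' * Real.log (x/z₀) := by
        rw [← intervalIntegral.integral_of_le hx.le,
          intervalIntegral.integral_const_mul, integral_one_div]
        intro h0
        rw [uIcc_of_le hx.le] at h0
        exact absurd h0.1 (not_le.2 hz₀0)
      have h3 : J = ∫ t in Ioc z₀ x, f t := intervalIntegral.integral_of_le hx.le
      rw [h3]
      exact h1.trans (le_of_eq h2)
    have hexp : (x/z₀ : ℝ) ^ (-(1/c'')) ≤ Real.exp (-J) := by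
      have h5 := Real.exp_le_exp.2 (neg_le_neg hJub)
      refine le_trans (le_of_eq ?_) h5
      rw [Real.rpow_def_of_pos (by positivity)]
      congr 1
      ring
    have heq : (x/z₀ : ℝ) ^ (-(1/c'')) = z₀ ^ (1/c'') * x ^ (-(1/c'')) := by
      rw [Real.div_rpow hx0.le hz₀0.le, div_eq_mul_inv, ← Real.rpow_neg hz₀0.le, neg_neg,
        mul_comm]
    calc A z₀ * (z₀ ^ (1/c'') * x ^ (-(1/c''))) = A z₀ * ((x/z₀) ^ (-(1/c''))) := by
          rw [heq]
      _ ≤ A z₀ * Real.exp (-J) := mul_le_mul_of_nonneg_left hexp (hApos z₀).le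
      _ = A x := hAxJ.symm
  -- final assembly
  have h1c : (0:ℝ) < 1 + c' := by linarith
  have hone : (1:ℝ) - c'/(1+c') = 1/(1+c') := by field_simp; ring
  have hchain : (M / 2 * (c' ^ c' / (1 + c') ^ (1 + c')) * A z₀ * z₀ ^ (1 / c'')) *
      x ^ (-1 - 1 / c'') ≤ ∫ t in Ioc x b, ψ t := by
    have hIψ : ∫ t in Ioc x b, ψ t = M / (2*b) * ∫ t in Ioc x b, A t * f t := by
      simp only [hψ]
      exact MeasureTheory.integral_const_mul _ _
    have hmid : 1/(1+c') ≤ 1 - Real.exp (-(F b)) := by linarith [hFb, hone]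
    have step1 : M / (2*b) * (A z₀ * (z₀ ^ (1/c'') * x ^ (-(1/c''))) * (1/(1+c'))) ≤
        ∫ t in Ioc x b, ψ t := by
      rw [hIψ]
      apply mul_le_mul_of_nonneg_left ?_ (by positivity)
      calc A z₀ * (z₀ ^ (1/c'') * x ^ (-(1/c''))) * (1/(1+c'))
          ≤ A x * (1 - Real.exp (-(F b))) := by
            apply mul_le_mul hAx hmid (by positivity) (hApos x).le
        _ ≤ _ := hI2
    refine le_trans (le_of_eq ?_) step1
    rw [hb, hlam]
    have e1 : x ^ (-1 - 1/c'' : ℝ) = x⁻¹ * x ^ (-(1/c'')) := by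
      rw [show (-1 - 1/c'' : ℝ) = (-1) + (-(1/c'')) by ring, Real.rpow_add hx0,
        Real.rpow_neg_one]
    have e2 : ((1+c') : ℝ) ^ (1+c' : ℝ) = (1+c') * (1+c')^(c' : ℝ) := by
      rw [Real.rpow_add h1c, Real.rpow_one]
    have e3 : ((1 + c') / c' : ℝ) ^ (c' : ℝ) = (1+c')^(c':ℝ) / c'^(c':ℝ) :=
      Real.div_rpow (by positivity) hc'0.le c'
    rw [e1, e2, e3]
    have p1 : (0:ℝ) < c' ^ (c':ℝ) := Real.rpow_pos_of_pos hc'0 _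
    have p2 : (0:ℝ) < (1+c') ^ (c':ℝ) := Real.rpow_pos_of_pos h1c _
    have keyeq : ∀ m az zb xb p q xx e : ℝ, 0 < p → 0 < q → 0 < xx → 0 < e →
        m / 2 * (p / (e * q)) * az * zb * (xx⁻¹ * xb)
          = m / (2 * (q / p * xx)) * (az * (zb * xb) * (1/e)) := by
      intro m az zb xb p q xx e hp hq hxx he
      field_simp
    exact keyeq M (A z₀) (z₀ ^ (1/c'')) (x ^ (-(1/c''))) _ _ x (1+c') p1 p2 hx0 h1c
  have hne : μ {ω | x < X ω} ≠ ⊤ := measure_ne_top μ _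
  rw [ge_iff_le, ← ENNReal.ofReal_le_iff_le_toReal hne, hμeq]
  calc ENNReal.ofReal ((M / 2 * (c' ^ c' / (1 + c') ^ (1 + c')) * A z₀ * z₀ ^ (1 / c'')) *
        x ^ (-1 - 1 / c''))
      ≤ ENNReal.ofReal (∫ t in Ioc x b, ψ t) := ENNReal.ofReal_le_ofReal hchain
    _ = ∫⁻ t in Ioc x b, ENNReal.ofReal (ψ t) := ofReal_integral_eq_lintegral_ofReal hψint hψnn
    _ ≤ ∫⁻ t in Ioc x b, ENNReal.ofReal (ρ t) := lintegral_mono_ae hψρ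
    _ ≤ ∫⁻ t in Ioi x, ENNReal.ofReal (ρ t) := lintegral_mono_set Ioc_subset_Ioi_self
end
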